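/- arXiv:2111.04533 — 16 statements merged into one kernel-verified Lean document; each statement's English description precedes it below -/
import Mathlib

section
/- Let P=(x₁,y₁) and Q=(x₂,y₂) be points on the twisted Edwards curve E with 1+d·x₁x₂y₁y₂ ≠ 0 and 1−d·x₁x₂y₁y₂ ≠ 0, and let (x₃,y₃)=P+Q and (x₄,y₄)=P−Q be given by the stated addition formulas. Set r_P = y₁² and r_Q = y₂², L = (d²r_P² − 2ad·r_P + a²)·r_Q² + (−2ad·r_P² + (2ad+2a²)·r_P − 2a²)·r_Q + a²·r_P² − 2a²·r_P + a², and M = (d²r_P² − 2d²r_P + d²)·r_Q² + (−2d²r_P² + (2d²+2ad)·r_P − 2ad)·r_Q + d²·r_P² − 2ad·r_P + a². If M ≠ 0, then y₃²·y₄² = L/M. -/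
/-!
Write `r = y₁²`, `s = y₂²`. On the curve `x² (a - d y²) = 1 - y²`, so `x₁² x₂²` is a rational
function of `r, s`. The product `y₃ y₄` has numerator `r s - a² x₁² x₂²` and denominator
`1 - d² x₁² x₂² r s`; after clearing `(a - d r)(a - d s)`, both acquire the common factor
`d r s - a`, and what remains is `y₃ y₄ = -S / T` with `S = d r s - a r - a s + a` and
`T = d r s - d r - d s + a`; `T ≠ 0` because the denominator does not vanish. The claimed
`L` and `M` are `S²` and `T²`.
-/

namespace TwistedEdwards

variable {K : Type*} [Field K] {a d x y x1 y1 x2 y2 : K}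

theorem a_sub_d_mul_sq_ne_zero (had : a ≠ d) (h : a * x ^ 2 + y ^ 2 = 1 + d * x ^ 2 * y ^ 2) :
    a - d * y ^ 2 ≠ 0 := by
  intro hA
  have hy : y ^ 2 = 1 := by linear_combination h - x ^ 2 * hA
  exact had (by linear_combination hA + d * hy)

theorem numer_mul_eq (hP : a * x1 ^ 2 + y1 ^ 2 = 1 + d * x1 ^ 2 * y1 ^ 2)
    (hQ : a * x2 ^ 2 + y2 ^ 2 = 1 + d * x2 ^ 2 * y2 ^ 2) :
    (y1 ^ 2 * y2 ^ 2 - a ^ 2 * x1 ^ 2 * x2 ^ 2) * ((a - d * y1 ^ 2) * (a - d * y2 ^ 2))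
      = (d * y1 ^ 2 * y2 ^ 2 - a) * (d * y1 ^ 2 * y2 ^ 2 - a * y1 ^ 2 - a * y2 ^ 2 + a) := by
  linear_combination (-a ^ 2) * ((x2 ^ 2 * (a - d * y2 ^ 2)) * hP + (1 - y1 ^ 2) * hQ)

theorem denom_mul_eq (hP : a * x1 ^ 2 + y1 ^ 2 = 1 + d * x1 ^ 2 * y1 ^ 2)
    (hQ : a * x2 ^ 2 + y2 ^ 2 = 1 + d * x2 ^ 2 * y2 ^ 2) :
    (1 - d ^ 2 * x1 ^ 2 * x2 ^ 2 * y1 ^ 2 * y2 ^ 2) * ((a - d * y1 ^ 2) * (a - d * y2 ^ 2))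
      = -((d * y1 ^ 2 * y2 ^ 2 - a) * (d * y1 ^ 2 * y2 ^ 2 - d * y1 ^ 2 - d * y2 ^ 2 + a)) := by
  linear_combination (-(d ^ 2 * y1 ^ 2 * y2 ^ 2)) *
    ((x2 ^ 2 * (a - d * y2 ^ 2)) * hP + (1 - y1 ^ 2) * hQ)

theorem denom_factor_ne_zero (had : a ≠ d)
    (hP : a * x1 ^ 2 + y1 ^ 2 = 1 + d * x1 ^ 2 * y1 ^ 2)
    (hQ : a * x2 ^ 2 + y2 ^ 2 = 1 + d * x2 ^ 2 * y2 ^ 2)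
    (hden1 : 1 + d * x1 * x2 * y1 * y2 ≠ 0) (hden2 : 1 - d * x1 * x2 * y1 * y2 ≠ 0) :
    d * y1 ^ 2 * y2 ^ 2 - d * y1 ^ 2 - d * y2 ^ 2 + a ≠ 0 := by
  intro hT
  have h : (1 - d * x1 * x2 * y1 * y2) * (1 + d * x1 * x2 * y1 * y2)
      * ((a - d * y1 ^ 2) * (a - d * y2 ^ 2)) = 0 := by
    linear_combination denom_mul_eq hP hQ - (d * y1 ^ 2 * y2 ^ 2 - a) * hT
  exact mul_ne_zero hden2 hden1 ((mul_eq_zero.mp h).resolve_right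
    (mul_ne_zero (a_sub_d_mul_sq_ne_zero had hP) (a_sub_d_mul_sq_ne_zero had hQ)))

theorem y_add_mul_y_sub_mul_eq (had : a ≠ d)
    (hP : a * x1 ^ 2 + y1 ^ 2 = 1 + d * x1 ^ 2 * y1 ^ 2)
    (hQ : a * x2 ^ 2 + y2 ^ 2 = 1 + d * x2 ^ 2 * y2 ^ 2)
    (hden1 : 1 + d * x1 * x2 * y1 * y2 ≠ 0) (hden2 : 1 - d * x1 * x2 * y1 * y2 ≠ 0) :
    (y1 * y2 - a * x1 * x2) / (1 - d * x1 * x2 * y1 * y2)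
        * ((y1 * y2 + a * x1 * x2) / (1 + d * x1 * x2 * y1 * y2))
        * (d * y1 ^ 2 * y2 ^ 2 - d * y1 ^ 2 - d * y2 ^ 2 + a)
      = -(d * y1 ^ 2 * y2 ^ 2 - a * y1 ^ 2 - a * y2 ^ 2 + a) := by
  have hAB := mul_ne_zero (a_sub_d_mul_sq_ne_zero had hP) (a_sub_d_mul_sq_ne_zero had hQ)
  have cross : (y1 ^ 2 * y2 ^ 2 - a ^ 2 * x1 ^ 2 * x2 ^ 2)
        * (d * y1 ^ 2 * y2 ^ 2 - d * y1 ^ 2 - d * y2 ^ 2 + a)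
      = -((d * y1 ^ 2 * y2 ^ 2 - a * y1 ^ 2 - a * y2 ^ 2 + a)
        * (1 - d ^ 2 * x1 ^ 2 * x2 ^ 2 * y1 ^ 2 * y2 ^ 2)) := by
    refine mul_right_cancel₀ hAB ?_
    linear_combination (d * y1 ^ 2 * y2 ^ 2 - d * y1 ^ 2 - d * y2 ^ 2 + a) * numer_mul_eq hP hQ
      + (d * y1 ^ 2 * y2 ^ 2 - a * y1 ^ 2 - a * y2 ^ 2 + a) * denom_mul_eq hP hQ
  rw [div_mul_div_comm, div_mul_eq_mul_div, div_eq_iff (mul_ne_zero hden2 hden1)]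
  linear_combination cross

end TwistedEdwards

open TwistedEdwards in
theorem edwards_deg4_diff_add_general {K : Type*} [Field K] (a d : K)
    (had : a ≠ d)
    (x1 y1 x2 y2 y3 y4 : K)
    (hP : a * x1 ^ 2 + y1 ^ 2 = 1 + d * x1 ^ 2 * y1 ^ 2)
    (hQ : a * x2 ^ 2 + y2 ^ 2 = 1 + d * x2 ^ 2 * y2 ^ 2)
    (hden1 : 1 + d * x1 * x2 * y1 * y2 ≠ 0)
    (hden2 : 1 - d * x1 * x2 * y1 * y2 ≠ 0)
    (hy3 : y3 = (y1 * y2 - a * x1 * x2) / (1 - d * x1 * x2 * y1 * y2))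
    (hy4 : y4 = (y1 * y2 + a * x1 * x2) / (1 + d * x1 * x2 * y1 * y2))
    (rP rQ L M : K)
    (hrP : rP = y1 ^ 2) (hrQ : rQ = y2 ^ 2)
    (hL : L = (d ^ 2 * rP ^ 2 - 2 * a * d * rP + a ^ 2) * rQ ^ 2
        + (-(2 * a * d) * rP ^ 2 + (2 * a * d + 2 * a ^ 2) * rP - 2 * a ^ 2) * rQ
        + a ^ 2 * rP ^ 2 - 2 * a ^ 2 * rP + a ^ 2)
    (hM : M = (d ^ 2 * rP ^ 2 - 2 * d ^ 2 * rP + d ^ 2) * rQ ^ 2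
        + (-(2 * d ^ 2) * rP ^ 2 + (2 * d ^ 2 + 2 * a * d) * rP - 2 * a * d) * rQ
        + d ^ 2 * rP ^ 2 - 2 * a * d * rP + a ^ 2) :
    y3 ^ 2 * y4 ^ 2 = L / M := by
  set S := d * y1 ^ 2 * y2 ^ 2 - a * y1 ^ 2 - a * y2 ^ 2 + a
  set T := d * y1 ^ 2 * y2 ^ 2 - d * y1 ^ 2 - d * y2 ^ 2 + a
  have hT : T ≠ 0 := denom_factor_ne_zero had hP hQ hden1 hden2
  have hy34 : y3 * y4 * T = -S := hy3 ▸ hy4 ▸ y_add_mul_y_sub_mul_eq had hP hQ hden1 hden2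
  have hLS : L = S ^ 2 := by rw [hL, hrP, hrQ]; ring
  have hMT : M = T ^ 2 := by rw [hM, hrP, hrQ]; ring
  rw [hLS, hMT, eq_div_iff (pow_ne_zero 2 hT)]
  linear_combination (y3 * y4 * T - S) * hy34

/-- Differential addition for the degree-4 compression `f₄(x,y) = y²` on the
twisted Edwards curve `a·x² + y² = 1 + d·x²·y²`. -/
theorem edwards_deg4_diff_add {K : Type*} [Field K] (a d : K)
    (hchar : (2 : K) ≠ 0) (ha : a ≠ 0) (hd : d ≠ 0) (had : a ≠ d)
    (x1 y1 x2 y2 x3 y3 x4 y4 : K)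
    (hP : a * x1 ^ 2 + y1 ^ 2 = 1 + d * x1 ^ 2 * y1 ^ 2)
    (hQ : a * x2 ^ 2 + y2 ^ 2 = 1 + d * x2 ^ 2 * y2 ^ 2)
    (hden1 : 1 + d * x1 * x2 * y1 * y2 ≠ 0)
    (hden2 : 1 - d * x1 * x2 * y1 * y2 ≠ 0)
    (hx3 : x3 = (x1 * y2 + y1 * x2) / (1 + d * x1 * x2 * y1 * y2))
    (hy3 : y3 = (y1 * y2 - a * x1 * x2) / (1 - d * x1 * x2 * y1 * y2))
    (hx4 : x4 = (x1 * y2 - y1 * x2) / (1 - d * x1 * x2 * y1 * y2))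
    (hy4 : y4 = (y1 * y2 + a * x1 * x2) / (1 + d * x1 * x2 * y1 * y2))
    (rP rQ L M : K)
    (hrP : rP = y1 ^ 2) (hrQ : rQ = y2 ^ 2)
    (hL : L = (d ^ 2 * rP ^ 2 - 2 * a * d * rP + a ^ 2) * rQ ^ 2
        + (-(2 * a * d) * rP ^ 2 + (2 * a * d + 2 * a ^ 2) * rP - 2 * a ^ 2) * rQ
        + a ^ 2 * rP ^ 2 - 2 * a ^ 2 * rP + a ^ 2)
    (hM : M = (d ^ 2 * rP ^ 2 - 2 * d ^ 2 * rP + d ^ 2) * rQ ^ 2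
        + (-(2 * d ^ 2) * rP ^ 2 + (2 * d ^ 2 + 2 * a * d) * rP - 2 * a * d) * rQ
        + d ^ 2 * rP ^ 2 - 2 * a * d * rP + a ^ 2)
    (hM0 : M ≠ 0) :
    y3 ^ 2 * y4 ^ 2 = L / M :=
  edwards_deg4_diff_add_general a d had x1 y1 x2 y2 y3 y4 hP hQ hden1 hden2 hy3 hy4 rP rQ L M hrP
    hrQ hL hM
end

section
/- Let P=(x₁,y₁) be a point on the twisted Edwards curve E with 1+d·x₁²y₁² ≠ 0 and 1−d·x₁²y₁² ≠ 0, and let [2]P = (x₃,y₃) be obtained from the addition formulas with Q = P. Set r = y₁². If d²r⁴ − 4d²r³ + (4d²+2ad)r² − 4ad·r + a² ≠ 0, then y₃² = (d²r⁴ − 4ad·r³ + (2ad+4a²)r² − 4a²·r + a²)/(d²r⁴ − 4d²r³ + (4d²+2ad)r² − 4ad·r + a²). -/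
/-- Doubling for the degree-4 compression `f₄(x,y) = y²` on the twisted
Edwards curve `a·x² + y² = 1 + d·x²·y²`. -/
theorem edwards_deg4_doubling {K : Type*} [Field K] (a d : K)
    (hchar : (2 : K) ≠ 0) (ha : a ≠ 0) (hd : d ≠ 0) (had : a ≠ d)
    (x1 y1 x3 y3 : K)
    (hP : a * x1 ^ 2 + y1 ^ 2 = 1 + d * x1 ^ 2 * y1 ^ 2)
    (hden1 : 1 + d * x1 ^ 2 * y1 ^ 2 ≠ 0)
    (hden2 : 1 - d * x1 ^ 2 * y1 ^ 2 ≠ 0)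
    (hx3 : x3 = (x1 * y1 + y1 * x1) / (1 + d * x1 * x1 * y1 * y1))
    (hy3 : y3 = (y1 * y1 - a * x1 * x1) / (1 - d * x1 * x1 * y1 * y1))
    (r : K) (hr : r = y1 ^ 2)
    (hM0 : d ^ 2 * r ^ 4 - 4 * d ^ 2 * r ^ 3 + (4 * d ^ 2 + 2 * a * d) * r ^ 2
        - 4 * a * d * r + a ^ 2 ≠ 0) :
    y3 ^ 2 = (d ^ 2 * r ^ 4 - 4 * a * d * r ^ 3 + (2 * a * d + 4 * a ^ 2) * r ^ 2
        - 4 * a ^ 2 * r + a ^ 2)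
      / (d ^ 2 * r ^ 4 - 4 * d ^ 2 * r ^ 3 + (4 * d ^ 2 + 2 * a * d) * r ^ 2
        - 4 * a * d * r + a ^ 2) := by
  subst hy3 hr
  have hden2' : 1 - d * x1 * x1 * y1 * y1 ≠ 0 := by
    intro h; apply hden2; linear_combination h
  have hs : x1 ^ 2 * (a - d * y1 ^ 2) = 1 - y1 ^ 2 := by linear_combination hP
  have he : a - d * y1 ^ 2 ≠ 0 := by
    intro h
    have hr1 : y1 ^ 2 = 1 := by
      have h' := hs
      rw [h, mul_zero] at h'
      linear_combination h'
    exact had (by linear_combination h + d * hr1)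
  have h1 : (y1 * y1 - a * x1 * x1) * (a - d * y1 ^ 2)
      = 2 * a * y1 ^ 2 - d * y1 ^ 4 - a := by linear_combination (-a) * hP
  have h2 : (1 - d * x1 * x1 * y1 * y1) * (a - d * y1 ^ 2)
      = a - 2 * d * y1 ^ 2 + d * y1 ^ 4 := by linear_combination (-(d * y1 ^ 2)) * hP
  rw [div_pow, div_eq_div_iff (pow_ne_zero 2 hden2') hM0]
  apply mul_right_cancel₀ (pow_ne_zero 2 he)
  calc (y1 * y1 - a * x1 * x1) ^ 2
        * (d ^ 2 * (y1 ^ 2) ^ 4 - 4 * d ^ 2 * (y1 ^ 2) ^ 3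
          + (4 * d ^ 2 + 2 * a * d) * (y1 ^ 2) ^ 2 - 4 * a * d * y1 ^ 2 + a ^ 2)
        * (a - d * y1 ^ 2) ^ 2
      = ((y1 * y1 - a * x1 * x1) * (a - d * y1 ^ 2)) ^ 2
        * (d ^ 2 * (y1 ^ 2) ^ 4 - 4 * d ^ 2 * (y1 ^ 2) ^ 3
          + (4 * d ^ 2 + 2 * a * d) * (y1 ^ 2) ^ 2 - 4 * a * d * y1 ^ 2 + a ^ 2) := by
        ring
    _ = (2 * a * y1 ^ 2 - d * y1 ^ 4 - a) ^ 2
        * (d ^ 2 * (y1 ^ 2) ^ 4 - 4 * d ^ 2 * (y1 ^ 2) ^ 3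
          + (4 * d ^ 2 + 2 * a * d) * (y1 ^ 2) ^ 2 - 4 * a * d * y1 ^ 2 + a ^ 2) := by
        rw [h1]
    _ = (d ^ 2 * (y1 ^ 2) ^ 4 - 4 * a * d * (y1 ^ 2) ^ 3
          + (2 * a * d + 4 * a ^ 2) * (y1 ^ 2) ^ 2 - 4 * a ^ 2 * y1 ^ 2 + a ^ 2)
        * ((1 - d * x1 * x1 * y1 * y1) * (a - d * y1 ^ 2)) ^ 2 := by
        rw [h2]; ring
    _ = (d ^ 2 * (y1 ^ 2) ^ 4 - 4 * a * d * (y1 ^ 2) ^ 3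
          + (2 * a * d + 4 * a ^ 2) * (y1 ^ 2) ^ 2 - 4 * a ^ 2 * y1 ^ 2 + a ^ 2)
        * (1 - d * x1 * x1 * y1 * y1) ^ 2 * (a - d * y1 ^ 2) ^ 2 := by ring
end

section
/- Let P=(x₁,y₁) and Q=(x₂,y₂) be points on the twisted Edwards curve E with 1+d·x₁x₂y₁y₂ ≠ 0 and 1−d·x₁x₂y₁y₂ ≠ 0, and let (x₃,y₃)=P+Q and (x₄,y₄)=P−Q be given by the stated addition formulas. Set r_P = x₁²y₁² and r_Q = x₂²y₂². If d²·r_P·r_Q ≠ 1, then (x₃y₃)²·(x₄y₄)² = (r_P − r_Q)²/(d²·r_P·r_Q − 1)². -/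
/-!
With `t = d x₁x₂y₁y₂`, the product `x₃y₃ · x₄y₄` has numerator
`(x₁²y₂² − x₂²y₁²)(y₁²y₂² − a²x₁²x₂²)` and denominator `(1 + t)²(1 − t)² = (1 − d² r_P r_Q)²`.
On the curve the numerator factors as `(r_P − r_Q)(1 − d² r_P r_Q)`, so
`x₃y₃ · x₄y₄ = (r_P − r_Q)/(1 − d² r_P r_Q)`. Since `(1 + t)(1 − t) = 1 − d² r_P r_Q`, the
hypothesis `d² r_P r_Q ≠ 1` already makes the addition formulas well defined.
-/

theorem twistedEdwards_add_sub_numerator_eq {R : Type*} [CommRing R] {a d x1 y1 x2 y2 : R}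
    (hP : a * x1 ^ 2 + y1 ^ 2 = 1 + d * x1 ^ 2 * y1 ^ 2)
    (hQ : a * x2 ^ 2 + y2 ^ 2 = 1 + d * x2 ^ 2 * y2 ^ 2) :
    (x1 * y2 + y1 * x2) * (y1 * y2 - a * x1 * x2) * ((x1 * y2 - y1 * x2) * (y1 * y2 + a * x1 * x2))
      = (x1 ^ 2 * y1 ^ 2 - x2 ^ 2 * y2 ^ 2) * (1 - d ^ 2 * (x1 ^ 2 * y1 ^ 2) * (x2 ^ 2 * y2 ^ 2)) := by
  linear_combination (x1 ^ 2 * y1 ^ 2 * (a * x2 ^ 2 + y2 ^ 2 + 1 + d * x2 ^ 2 * y2 ^ 2)) * hQ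
    - (x2 ^ 2 * y2 ^ 2 * (a * x1 ^ 2 + y1 ^ 2 + 1 + d * x1 ^ 2 * y1 ^ 2)) * hP

theorem twistedEdwards_add_mul_sub_eq {K : Type*} [Field K] {a d x1 y1 x2 y2 : K}
    (hP : a * x1 ^ 2 + y1 ^ 2 = 1 + d * x1 ^ 2 * y1 ^ 2)
    (hQ : a * x2 ^ 2 + y2 ^ 2 = 1 + d * x2 ^ 2 * y2 ^ 2)
    (h : 1 - d ^ 2 * (x1 ^ 2 * y1 ^ 2) * (x2 ^ 2 * y2 ^ 2) ≠ 0) :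
    (x1 * y2 + y1 * x2) / (1 + d * x1 * x2 * y1 * y2)
        * ((y1 * y2 - a * x1 * x2) / (1 - d * x1 * x2 * y1 * y2))
      * ((x1 * y2 - y1 * x2) / (1 - d * x1 * x2 * y1 * y2)
        * ((y1 * y2 + a * x1 * x2) / (1 + d * x1 * x2 * y1 * y2)))
      = (x1 ^ 2 * y1 ^ 2 - x2 ^ 2 * y2 ^ 2) / (1 - d ^ 2 * (x1 ^ 2 * y1 ^ 2) * (x2 ^ 2 * y2 ^ 2)) := by
  have hden : (1 + d * x1 * x2 * y1 * y2) * (1 - d * x1 * x2 * y1 * y2)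
      = 1 - d ^ 2 * (x1 ^ 2 * y1 ^ 2) * (x2 ^ 2 * y2 ^ 2) := by ring
  rw [div_mul_div_comm, div_mul_div_comm, div_mul_div_comm, mul_comm (1 - _) (1 + _), hden,
    twistedEdwards_add_sub_numerator_eq hP hQ, mul_div_mul_right _ _ h]

theorem edwards_deg8_diff_add_general {K : Type*} [Field K] (a d : K)
    (x1 y1 x2 y2 x3 y3 x4 y4 : K)
    (hP : a * x1 ^ 2 + y1 ^ 2 = 1 + d * x1 ^ 2 * y1 ^ 2)
    (hQ : a * x2 ^ 2 + y2 ^ 2 = 1 + d * x2 ^ 2 * y2 ^ 2)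
    (hx3 : x3 = (x1 * y2 + y1 * x2) / (1 + d * x1 * x2 * y1 * y2))
    (hy3 : y3 = (y1 * y2 - a * x1 * x2) / (1 - d * x1 * x2 * y1 * y2))
    (hx4 : x4 = (x1 * y2 - y1 * x2) / (1 - d * x1 * x2 * y1 * y2))
    (hy4 : y4 = (y1 * y2 + a * x1 * x2) / (1 + d * x1 * x2 * y1 * y2))
    (rP rQ : K)
    (hrP : rP = x1 ^ 2 * y1 ^ 2) (hrQ : rQ = x2 ^ 2 * y2 ^ 2)
    (hM0 : d ^ 2 * rP * rQ ≠ 1) :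
    (x3 * y3) ^ 2 * (x4 * y4) ^ 2 = (rP - rQ) ^ 2 / (d ^ 2 * rP * rQ - 1) ^ 2 := by
  have hprod : x3 * y3 * (x4 * y4) = (rP - rQ) / (1 - d ^ 2 * rP * rQ) := by
    subst hx3 hy3 hx4 hy4 hrP hrQ
    exact twistedEdwards_add_mul_sub_eq hP hQ (sub_ne_zero.mpr hM0.symm)
  calc (x3 * y3) ^ 2 * (x4 * y4) ^ 2 = (x3 * y3 * (x4 * y4)) ^ 2 := by ring
    _ = (rP - rQ) ^ 2 / (d ^ 2 * rP * rQ - 1) ^ 2 := by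
      rw [hprod, div_pow, ← neg_sub (d ^ 2 * rP * rQ), neg_sq]

/-- Differential addition for the degree-8 compression `f₈(x,y) = x²y²` on the
twisted Edwards curve `a·x² + y² = 1 + d·x²·y²`. -/
theorem edwards_deg8_diff_add {K : Type*} [Field K] (a d : K)
    (hchar : (2 : K) ≠ 0) (ha : a ≠ 0) (hd : d ≠ 0) (had : a ≠ d)
    (x1 y1 x2 y2 x3 y3 x4 y4 : K)
    (hP : a * x1 ^ 2 + y1 ^ 2 = 1 + d * x1 ^ 2 * y1 ^ 2)
    (hQ : a * x2 ^ 2 + y2 ^ 2 = 1 + d * x2 ^ 2 * y2 ^ 2)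
    (hden1 : 1 + d * x1 * x2 * y1 * y2 ≠ 0)
    (hden2 : 1 - d * x1 * x2 * y1 * y2 ≠ 0)
    (hx3 : x3 = (x1 * y2 + y1 * x2) / (1 + d * x1 * x2 * y1 * y2))
    (hy3 : y3 = (y1 * y2 - a * x1 * x2) / (1 - d * x1 * x2 * y1 * y2))
    (hx4 : x4 = (x1 * y2 - y1 * x2) / (1 - d * x1 * x2 * y1 * y2))
    (hy4 : y4 = (y1 * y2 + a * x1 * x2) / (1 + d * x1 * x2 * y1 * y2))
    (rP rQ : K)
    (hrP : rP = x1 ^ 2 * y1 ^ 2) (hrQ : rQ = x2 ^ 2 * y2 ^ 2)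
    (hM0 : d ^ 2 * rP * rQ ≠ 1) :
    (x3 * y3) ^ 2 * (x4 * y4) ^ 2 = (rP - rQ) ^ 2 / (d ^ 2 * rP * rQ - 1) ^ 2 :=
  edwards_deg8_diff_add_general a d x1 y1 x2 y2 x3 y3 x4 y4 hP hQ hx3 hy3 hx4 hy4 rP rQ hrP hrQ hM0
end

section
/- Let P=(x₁,y₁) be a point on the twisted Edwards curve E with 1+d·x₁²y₁² ≠ 0 and 1−d·x₁²y₁² ≠ 0, and let [2]P = (x₃,y₃) be obtained from the addition formulas with Q = P. Set r = x₁²y₁². If d²r² ≠ 1, then x₃²y₃² = (4d²r³ + (8d − 16a)r² + 4r)/(d⁴r⁴ − 2d²r² + 1). -/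
/-!
Writing `r = x₁²y₁²`, the doubling formulas give
`x₃²y₃² = 4r (y₁² − a x₁²)² / ((1 + dr)(1 − dr))²`, and on the curve
`(y₁² − a x₁²)² = (y₁² + a x₁²)² − 4ar = (1 + dr)² − 4ar`, so `x₃²y₃²` is a rational function
of `r` alone.
-/

theorem sq_sub_mul_sq_sq_of_edwards {R : Type*} [CommRing R] {a d x y : R}
    (h : a * x ^ 2 + y ^ 2 = 1 + d * x ^ 2 * y ^ 2) :
    (y ^ 2 - a * x ^ 2) ^ 2 = (1 + d * (x ^ 2 * y ^ 2)) ^ 2 - 4 * a * (x ^ 2 * y ^ 2) := by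
  linear_combination (a * x ^ 2 + y ^ 2 + 1 + d * x ^ 2 * y ^ 2) * h

theorem edwards_double_sq_mul_sq {K : Type*} [Field K] {a d x y : K}
    (h : a * x ^ 2 + y ^ 2 = 1 + d * x ^ 2 * y ^ 2) :
    ((x * y + y * x) / (1 + d * x * x * y * y)) ^ 2
        * ((y * y - a * x * x) / (1 - d * x * x * y * y)) ^ 2
      = 4 * (x ^ 2 * y ^ 2) * ((1 + d * (x ^ 2 * y ^ 2)) ^ 2 - 4 * a * (x ^ 2 * y ^ 2))
        / (1 - d ^ 2 * (x ^ 2 * y ^ 2) ^ 2) ^ 2 := by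
  rw [← sq_sub_mul_sq_sq_of_edwards h, div_pow, div_pow, div_mul_div_comm]
  ring

theorem edwards_deg8_doubling_general {K : Type*} [Field K] (a d : K)
    (x1 y1 x3 y3 : K)
    (hP : a * x1 ^ 2 + y1 ^ 2 = 1 + d * x1 ^ 2 * y1 ^ 2)
    (hx3 : x3 = (x1 * y1 + y1 * x1) / (1 + d * x1 * x1 * y1 * y1))
    (hy3 : y3 = (y1 * y1 - a * x1 * x1) / (1 - d * x1 * x1 * y1 * y1))
    (r : K) (hr : r = x1 ^ 2 * y1 ^ 2) :
    x3 ^ 2 * y3 ^ 2 = (4 * d ^ 2 * r ^ 3 + (8 * d - 16 * a) * r ^ 2 + 4 * r)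
      / (d ^ 4 * r ^ 4 - 2 * d ^ 2 * r ^ 2 + 1) := by
  rw [hx3, hy3, edwards_double_sq_mul_sq hP, ← hr]
  ring

/-- Doubling for the degree-8 compression `f₈(x,y) = x²y²` on the twisted
Edwards curve `a·x² + y² = 1 + d·x²·y²`. -/
theorem edwards_deg8_doubling {K : Type*} [Field K] (a d : K)
    (hchar : (2 : K) ≠ 0) (ha : a ≠ 0) (hd : d ≠ 0) (had : a ≠ d)
    (x1 y1 x3 y3 : K)
    (hP : a * x1 ^ 2 + y1 ^ 2 = 1 + d * x1 ^ 2 * y1 ^ 2)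
    (hden1 : 1 + d * x1 ^ 2 * y1 ^ 2 ≠ 0)
    (hden2 : 1 - d * x1 ^ 2 * y1 ^ 2 ≠ 0)
    (hx3 : x3 = (x1 * y1 + y1 * x1) / (1 + d * x1 * x1 * y1 * y1))
    (hy3 : y3 = (y1 * y1 - a * x1 * x1) / (1 - d * x1 * x1 * y1 * y1))
    (r : K) (hr : r = x1 ^ 2 * y1 ^ 2)
    (hM0 : d ^ 2 * r ^ 2 ≠ 1) :
    x3 ^ 2 * y3 ^ 2 = (4 * d ^ 2 * r ^ 3 + (8 * d - 16 * a) * r ^ 2 + 4 * r)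
      / (d ^ 4 * r ^ 4 - 2 * d ^ 2 * r ^ 2 + 1) :=
  edwards_deg8_doubling_general a d x1 y1 x3 y3 hP hx3 hy3 r hr
end

section
/- Let P=(x₁,y₁) and Q=(x₂,y₂) be points on the generalized Hessian curve E such that the denominators in the sum and difference formulas are nonzero, and let (x₃,y₃)=P+Q and (x₄,y₄)=P−Q. Set r_P = x₁+y₁ and r_Q = x₂+y₂. If (3r_P + d)·r_Q² + (3r_P² + d·r_P)·r_Q + d·r_P² − 3a ≠ 0, then (x₃+y₃)·(x₄+y₄) = [(d·r_P² − 3a)·r_Q² + (6a·r_P + 2ad)·r_Q − 3a·r_P² + 2ad·r_P + ad²] / [(3r_P + d)·r_Q² + (3r_P² + d·r_P)·r_Q + d·r_P² − 3a]. -/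
/-!
Write `p = x₁y₁`, `q = x₂y₂` and `U = x₁²q - a·y₁`. Modulo the curve equations the product of the
denominators of `P + Q` and `P - Q` factors as `(q - p)·U`, and the product of the numerators of
`x₃ + y₃` and `x₄ + y₄` as `U·(r_P²q - p·r_Q² - a(r_P - r_Q))`. Cancelling `U` leaves a quotient in
`r_P, r_Q, p, q` only, and the curve equation in the form `p(3r_P + d) = r_P³ + a` (and likewise
for `Q`) eliminates `p` and `q`.
-/

section CommRing

variable {R : Type*} [CommRing R] {a d x y x1 y1 x2 y2 : R}

theorem genHessian_mul_three_add (h : x ^ 3 + y ^ 3 + a = d * x * y) :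
    x * y * (3 * (x + y) + d) = (x + y) ^ 3 + a := by
  linear_combination -h

theorem genHessian_addDen_mul_subDen
    (hP : x1 ^ 3 + y1 ^ 3 + a = d * x1 * y1) (hQ : x2 ^ 3 + y2 ^ 3 + a = d * x2 * y2) :
    (x1 * x2 ^ 2 - y2 * y1 ^ 2) * (x1 * y2 ^ 2 - x2 * y1 ^ 2)
      = (x2 * y2 - x1 * y1) * (x1 ^ 2 * (x2 * y2) - a * y1) := by
  linear_combination (-x1 * y1 ^ 2) * hQ + (x2 * y2 * y1) * hP

theorem genHessian_addNum_mul_subNum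
    (hP : x1 ^ 3 + y1 ^ 3 + a = d * x1 * y1) (hQ : x2 ^ 3 + y2 ^ 3 + a = d * x2 * y2) :
    (a * y1 - x2 * y2 * x1 ^ 2 + (x1 * y1 * y2 ^ 2 - a * x2))
        * (a * y1 - y2 * x2 * x1 ^ 2 + (x1 * y1 * x2 ^ 2 - a * y2))
      = (x1 ^ 2 * (x2 * y2) - a * y1)
        * ((x1 + y1) ^ 2 * (x2 * y2) - x1 * y1 * (x2 + y2) ^ 2 - a * (x1 + y1 - (x2 + y2))) := by
  linear_combination (-a * x1 * y1) * hQ + (a * x2 * y2) * hP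

end CommRing

section Field

variable {K : Type*} [Field K] {a d : K}

theorem genHessian_add_mul_sub_eq_div {x1 y1 x2 y2 : K}
    (hP : x1 ^ 3 + y1 ^ 3 + a = d * x1 * y1) (hQ : x2 ^ 3 + y2 ^ 3 + a = d * x2 * y2)
    (hden1 : x1 * x2 ^ 2 - y2 * y1 ^ 2 ≠ 0) (hden2 : x1 * y2 ^ 2 - x2 * y1 ^ 2 ≠ 0) :
    ((a * y1 - x2 * y2 * x1 ^ 2) / (x1 * x2 ^ 2 - y2 * y1 ^ 2)
        + (x1 * y1 * y2 ^ 2 - a * x2) / (x1 * x2 ^ 2 - y2 * y1 ^ 2))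
      * ((a * y1 - y2 * x2 * x1 ^ 2) / (x1 * y2 ^ 2 - x2 * y1 ^ 2)
        + (x1 * y1 * x2 ^ 2 - a * y2) / (x1 * y2 ^ 2 - x2 * y1 ^ 2))
      = ((x1 + y1) ^ 2 * (x2 * y2) - x1 * y1 * (x2 + y2) ^ 2 - a * (x1 + y1 - (x2 + y2)))
        / (x2 * y2 - x1 * y1) := by
  have hden := genHessian_addDen_mul_subDen hP hQ ▸ mul_ne_zero hden1 hden2
  rw [← add_div, ← add_div, div_mul_div_comm, genHessian_addNum_mul_subNum hP hQ,
    genHessian_addDen_mul_subDen hP hQ, mul_comm (x2 * y2 - x1 * y1),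
    mul_div_mul_left _ _ (right_ne_zero_of_mul hden)]

theorem genHessian_sym_div_eq_div {r s p q : K}
    (hp : p * (3 * r + d) = r ^ 3 + a) (hq : q * (3 * s + d) = s ^ 3 + a) (hpq : q - p ≠ 0)
    (hM : (3 * r + d) * s ^ 2 + (3 * r ^ 2 + d * r) * s + d * r ^ 2 - 3 * a ≠ 0) :
    (r ^ 2 * q - p * s ^ 2 - a * (r - s)) / (q - p)
      = ((d * r ^ 2 - 3 * a) * s ^ 2 + (6 * a * r + 2 * a * d) * s
          - 3 * a * r ^ 2 + 2 * a * d * r + a * d ^ 2)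
        / ((3 * r + d) * s ^ 2 + (3 * r ^ 2 + d * r) * s + d * r ^ 2 - 3 * a) := by
  rw [div_eq_div_iff hpq hM]
  linear_combination (r ^ 4 + r ^ 3 * s + a * (s - 2 * r - d)) * hq
    - (s ^ 4 + s ^ 3 * r + a * (r - 2 * s - d)) * hp

end Field

theorem genHessian_deg2_diff_add_mul_general {K : Type*} [Field K] (a d : K)
    (x1 y1 x2 y2 x3 y3 x4 y4 : K)
    (hP : x1 ^ 3 + y1 ^ 3 + a = d * x1 * y1)
    (hQ : x2 ^ 3 + y2 ^ 3 + a = d * x2 * y2)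
    (hden1 : x1 * x2 ^ 2 - y2 * y1 ^ 2 ≠ 0)
    (hden2 : x1 * y2 ^ 2 - x2 * y1 ^ 2 ≠ 0)
    (hx3 : x3 = (a * y1 - x2 * y2 * x1 ^ 2) / (x1 * x2 ^ 2 - y2 * y1 ^ 2))
    (hy3 : y3 = (x1 * y1 * y2 ^ 2 - a * x2) / (x1 * x2 ^ 2 - y2 * y1 ^ 2))
    (hx4 : x4 = (a * y1 - y2 * x2 * x1 ^ 2) / (x1 * y2 ^ 2 - x2 * y1 ^ 2))
    (hy4 : y4 = (x1 * y1 * x2 ^ 2 - a * y2) / (x1 * y2 ^ 2 - x2 * y1 ^ 2))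
    (rP rQ : K) (hrP : rP = x1 + y1) (hrQ : rQ = x2 + y2)
    (hM0 : (3 * rP + d) * rQ ^ 2 + (3 * rP ^ 2 + d * rP) * rQ + d * rP ^ 2 - 3 * a ≠ 0) :
    (x3 + y3) * (x4 + y4) =
      ((d * rP ^ 2 - 3 * a) * rQ ^ 2 + (6 * a * rP + 2 * a * d) * rQ
          - 3 * a * rP ^ 2 + 2 * a * d * rP + a * d ^ 2)
        / ((3 * rP + d) * rQ ^ 2 + (3 * rP ^ 2 + d * rP) * rQ + d * rP ^ 2 - 3 * a) := by
  subst hx3 hy3 hx4 hy4 hrP hrQ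
  have hpq : x2 * y2 - x1 * y1 ≠ 0 :=
    left_ne_zero_of_mul (genHessian_addDen_mul_subDen hP hQ ▸ mul_ne_zero hden1 hden2)
  rw [genHessian_add_mul_sub_eq_div hP hQ hden1 hden2]
  exact genHessian_sym_div_eq_div (genHessian_mul_three_add hP) (genHessian_mul_three_add hQ)
    hpq hM0

/-- Multiplicative differential addition for the degree-2 compression
`f₂(x,y) = x + y` on the generalized Hessian curve `x³ + y³ + a = d·x·y`. -/
theorem genHessian_deg2_diff_add_mul {K : Type*} [Field K] (a d : K)
    (hchar2 : (2 : K) ≠ 0) (hchar3 : (3 : K) ≠ 0)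
    (ha : a ≠ 0) (hd : d ^ 3 ≠ 27 * a)
    (x1 y1 x2 y2 x3 y3 x4 y4 : K)
    (hP : x1 ^ 3 + y1 ^ 3 + a = d * x1 * y1)
    (hQ : x2 ^ 3 + y2 ^ 3 + a = d * x2 * y2)
    (hden1 : x1 * x2 ^ 2 - y2 * y1 ^ 2 ≠ 0)
    (hden2 : x1 * y2 ^ 2 - x2 * y1 ^ 2 ≠ 0)
    (hx3 : x3 = (a * y1 - x2 * y2 * x1 ^ 2) / (x1 * x2 ^ 2 - y2 * y1 ^ 2))
    (hy3 : y3 = (x1 * y1 * y2 ^ 2 - a * x2) / (x1 * x2 ^ 2 - y2 * y1 ^ 2))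
    (hx4 : x4 = (a * y1 - y2 * x2 * x1 ^ 2) / (x1 * y2 ^ 2 - x2 * y1 ^ 2))
    (hy4 : y4 = (x1 * y1 * x2 ^ 2 - a * y2) / (x1 * y2 ^ 2 - x2 * y1 ^ 2))
    (rP rQ : K) (hrP : rP = x1 + y1) (hrQ : rQ = x2 + y2)
    (hM0 : (3 * rP + d) * rQ ^ 2 + (3 * rP ^ 2 + d * rP) * rQ + d * rP ^ 2 - 3 * a ≠ 0) :
    (x3 + y3) * (x4 + y4) =
      ((d * rP ^ 2 - 3 * a) * rQ ^ 2 + (6 * a * rP + 2 * a * d) * rQ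
          - 3 * a * rP ^ 2 + 2 * a * d * rP + a * d ^ 2)
        / ((3 * rP + d) * rQ ^ 2 + (3 * rP ^ 2 + d * rP) * rQ + d * rP ^ 2 - 3 * a) :=
  genHessian_deg2_diff_add_mul_general a d x1 y1 x2 y2 x3 y3 x4 y4 hP hQ hden1 hden2 hx3 hy3 hx4 hy4
    rP rQ hrP hrQ hM0
end

section
/- Let P=(x₁,y₁) and Q=(x₂,y₂) be points on the generalized Hessian curve E such that the denominators in the sum and difference formulas are nonzero, and let (x₃,y₃)=P+Q and (x₄,y₄)=P−Q. Set r_P = x₁+y₁ and r_Q = x₂+y₂. If (3r_P + d)·r_Q² + (3r_P² + d·r_P)·r_Q + d·r_P² − 3a ≠ 0, then (x₃+y₃) + (x₄+y₄) = −[(3r_P² + d·r_P)·r_Q² + (d·r_P² + d²·r_P + 6a)·r_Q + 6a·r_P + 2ad] / [(3r_P + d)·r_Q² + (3r_P² + d·r_P)·r_Q + d·r_P² − 3a]. -/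
/-!
Write `s = x + y` and `p = x y`; on the curve, `p (3s + d) = s³ + a`. The given sum law
agrees on the curve with the classical Hessian law
`P + Q = ((y₁²x₂ - y₂²x₁) / (p₂ - p₁), (x₁²y₂ - x₂²y₁) / (p₂ - p₁))`, under which
`f₂(P + Q) + f₂(P - Q) = ((s₁² - 2p₁) s₂ - s₁ (s₂² - 2p₂)) / (p₂ - p₁)` is symmetric in the
coordinates of each point. Eliminating `p₁, p₂` turns `p₂ - p₁` into `(s₂ - s₁) M / ((3s₁ + d)(3s₂ + d))`,
with `M` the stated denominator, and `s₁ ≠ s₂` because `Q ≠ ±P`.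
-/

namespace GenHessian

variable {K : Type*}

theorem mul_three_mul_add_eq [CommRing K] {a d x y : K} (h : x ^ 3 + y ^ 3 + a = d * x * y) :
    x * y * (3 * (x + y) + d) = (x + y) ^ 3 + a := by
  linear_combination -h

theorem three_mul_add_ne_zero [CommRing K] {a d s p : K} (hd : d ^ 3 ≠ 27 * a)
    (h : p * (3 * s + d) = s ^ 3 + a) : 3 * s + d ≠ 0 := by
  intro h0
  apply hd
  linear_combination (d ^ 2 - 3 * s * d + 9 * s ^ 2 - 27 * p) * h0 + 27 * h

theorem add_add_mul_prod_sub_prod [Field K] {a d x1 y1 x2 y2 : K}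
    (hP : x1 ^ 3 + y1 ^ 3 + a = d * x1 * y1) (hQ : x2 ^ 3 + y2 ^ 3 + a = d * x2 * y2)
    (hden : x1 * x2 ^ 2 - y2 * y1 ^ 2 ≠ 0) :
    ((a * y1 - x2 * y2 * x1 ^ 2) / (x1 * x2 ^ 2 - y2 * y1 ^ 2)
        + (x1 * y1 * y2 ^ 2 - a * x2) / (x1 * x2 ^ 2 - y2 * y1 ^ 2)) * (x2 * y2 - x1 * y1)
      = (y1 ^ 2 * x2 - y2 ^ 2 * x1) + (x1 ^ 2 * y2 - x2 ^ 2 * y1) := by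
  rw [← add_div, div_mul_eq_mul_div, div_eq_iff hden]
  linear_combination (y1 * x2 * y2 - x2 ^ 2 * y2) * hP + (x1 * x2 * y1 - x1 * y1 ^ 2) * hQ

theorem prod_sub_prod_mul [CommRing K] {a d s1 s2 p1 p2 : K}
    (h1 : p1 * (3 * s1 + d) = s1 ^ 3 + a) (h2 : p2 * (3 * s2 + d) = s2 ^ 3 + a) :
    (p2 - p1) * ((3 * s1 + d) * (3 * s2 + d))
      = (s2 - s1) * ((3 * s1 + d) * s2 ^ 2 + (3 * s1 ^ 2 + d * s1) * s2 + d * s1 ^ 2 - 3 * a) := by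
  linear_combination (3 * s1 + d) * h2 - (3 * s2 + d) * h1

theorem sum_sq_sub_mul [CommRing K] {a d s1 s2 p1 p2 : K}
    (h1 : p1 * (3 * s1 + d) = s1 ^ 3 + a) (h2 : p2 * (3 * s2 + d) = s2 ^ 3 + a) :
    ((s1 ^ 2 - 2 * p1) * s2 - s1 * (s2 ^ 2 - 2 * p2)) * ((3 * s1 + d) * (3 * s2 + d))
      = (s1 - s2) * ((3 * s1 ^ 2 + d * s1) * s2 ^ 2 + (d * s1 ^ 2 + d ^ 2 * s1 + 6 * a) * s2
          + 6 * a * s1 + 2 * a * d) := by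
  linear_combination (-2 * s2 * (3 * s2 + d)) * h1 + (2 * s1 * (3 * s1 + d)) * h2

theorem add_ne_add [Field K] {a d x1 y1 x2 y2 : K} (hd : d ^ 3 ≠ 27 * a)
    (hP : x1 ^ 3 + y1 ^ 3 + a = d * x1 * y1) (hQ : x2 ^ 3 + y2 ^ 3 + a = d * x2 * y2)
    (hden1 : x1 * x2 ^ 2 - y2 * y1 ^ 2 ≠ 0) (hden2 : x1 * y2 ^ 2 - x2 * y1 ^ 2 ≠ 0) :
    x1 + y1 ≠ x2 + y2 := by
  intro hs
  have h1 := mul_three_mul_add_eq hP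
  have hp : x1 * y1 = x2 * y2 := by
    refine mul_right_cancel₀ (three_mul_add_ne_zero hd h1) ?_
    rw [h1, hs]
    exact (mul_three_mul_add_eq hQ).symm
  have hroots : (x2 - x1) * (x2 - y1) = 0 := by linear_combination (-x2) * hs + hp
  rcases mul_eq_zero.1 hroots with hx | hx
  · obtain rfl : x2 = x1 := by linear_combination hx
    obtain rfl : y2 = y1 := by linear_combination -hs
    exact hden2 (by ring)
  · obtain rfl : x2 = y1 := by linear_combination hx
    obtain rfl : y2 = x1 := by linear_combination -hs
    exact hden1 (by ring)

end GenHessian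

open GenHessian in
theorem genHessian_deg2_diff_add_add_general {K : Type*} [Field K] (a d : K)
    (hd : d ^ 3 ≠ 27 * a)
    (x1 y1 x2 y2 x3 y3 x4 y4 : K)
    (hP : x1 ^ 3 + y1 ^ 3 + a = d * x1 * y1)
    (hQ : x2 ^ 3 + y2 ^ 3 + a = d * x2 * y2)
    (hden1 : x1 * x2 ^ 2 - y2 * y1 ^ 2 ≠ 0)
    (hden2 : x1 * y2 ^ 2 - x2 * y1 ^ 2 ≠ 0)
    (hx3 : x3 = (a * y1 - x2 * y2 * x1 ^ 2) / (x1 * x2 ^ 2 - y2 * y1 ^ 2))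
    (hy3 : y3 = (x1 * y1 * y2 ^ 2 - a * x2) / (x1 * x2 ^ 2 - y2 * y1 ^ 2))
    (hx4 : x4 = (a * y1 - y2 * x2 * x1 ^ 2) / (x1 * y2 ^ 2 - x2 * y1 ^ 2))
    (hy4 : y4 = (x1 * y1 * x2 ^ 2 - a * y2) / (x1 * y2 ^ 2 - x2 * y1 ^ 2))
    (rP rQ : K) (hrP : rP = x1 + y1) (hrQ : rQ = x2 + y2)
    (hM0 : (3 * rP + d) * rQ ^ 2 + (3 * rP ^ 2 + d * rP) * rQ + d * rP ^ 2 - 3 * a ≠ 0) :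
    (x3 + y3) + (x4 + y4) =
      -(((3 * rP ^ 2 + d * rP) * rQ ^ 2 + (d * rP ^ 2 + d ^ 2 * rP + 6 * a) * rQ
          + 6 * a * rP + 2 * a * d)
        / ((3 * rP + d) * rQ ^ 2 + (3 * rP ^ 2 + d * rP) * rQ + d * rP ^ 2 - 3 * a)) := by
  have hsum : (x3 + y3) * (x2 * y2 - x1 * y1)
      = (y1 ^ 2 * x2 - y2 ^ 2 * x1) + (x1 ^ 2 * y2 - x2 ^ 2 * y1) := by
    rw [hx3, hy3]
    exact add_add_mul_prod_sub_prod hP hQ hden1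
  have hdiff : (x4 + y4) * (y2 * x2 - x1 * y1)
      = (y1 ^ 2 * y2 - x2 ^ 2 * x1) + (x1 ^ 2 * x2 - y2 ^ 2 * y1) := by
    rw [hx4, hy4]
    exact add_add_mul_prod_sub_prod hP (by linear_combination hQ) hden2
  have hP' := mul_three_mul_add_eq hP
  have hQ' := mul_three_mul_add_eq hQ
  have hs : x2 + y2 - (x1 + y1) ≠ 0 := sub_ne_zero.2 (add_ne_add hd hP hQ hden1 hden2).symm
  subst hrP hrQ
  rw [eq_comm, neg_div', div_eq_iff hM0]
  refine mul_left_cancel₀ hs ?_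
  linear_combination -sum_sq_sub_mul hP' hQ' + (x3 + y3 + (x4 + y4)) * prod_sub_prod_mul hP' hQ'
    - (3 * (x1 + y1) + d) * (3 * (x2 + y2) + d) * (hsum + hdiff)

/-- Additive differential addition for the degree-2 compression
`f₂(x,y) = x + y` on the generalized Hessian curve `x³ + y³ + a = d·x·y`. -/
theorem genHessian_deg2_diff_add_add {K : Type*} [Field K] (a d : K)
    (hchar2 : (2 : K) ≠ 0) (hchar3 : (3 : K) ≠ 0)
    (ha : a ≠ 0) (hd : d ^ 3 ≠ 27 * a)
    (x1 y1 x2 y2 x3 y3 x4 y4 : K)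
    (hP : x1 ^ 3 + y1 ^ 3 + a = d * x1 * y1)
    (hQ : x2 ^ 3 + y2 ^ 3 + a = d * x2 * y2)
    (hden1 : x1 * x2 ^ 2 - y2 * y1 ^ 2 ≠ 0)
    (hden2 : x1 * y2 ^ 2 - x2 * y1 ^ 2 ≠ 0)
    (hx3 : x3 = (a * y1 - x2 * y2 * x1 ^ 2) / (x1 * x2 ^ 2 - y2 * y1 ^ 2))
    (hy3 : y3 = (x1 * y1 * y2 ^ 2 - a * x2) / (x1 * x2 ^ 2 - y2 * y1 ^ 2))
    (hx4 : x4 = (a * y1 - y2 * x2 * x1 ^ 2) / (x1 * y2 ^ 2 - x2 * y1 ^ 2))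
    (hy4 : y4 = (x1 * y1 * x2 ^ 2 - a * y2) / (x1 * y2 ^ 2 - x2 * y1 ^ 2))
    (rP rQ : K) (hrP : rP = x1 + y1) (hrQ : rQ = x2 + y2)
    (hM0 : (3 * rP + d) * rQ ^ 2 + (3 * rP ^ 2 + d * rP) * rQ + d * rP ^ 2 - 3 * a ≠ 0) :
    (x3 + y3) + (x4 + y4) =
      -(((3 * rP ^ 2 + d * rP) * rQ ^ 2 + (d * rP ^ 2 + d ^ 2 * rP + 6 * a) * rQ
          + 6 * a * rP + 2 * a * d)
        / ((3 * rP + d) * rQ ^ 2 + (3 * rP ^ 2 + d * rP) * rQ + d * rP ^ 2 - 3 * a)) :=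
  genHessian_deg2_diff_add_add_general a d hd x1 y1 x2 y2 x3 y3 x4 y4 hP hQ hden1 hden2 hx3 hy3 hx4
    hy4 rP rQ hrP hrQ hM0
end

section
/- Let P=(x₁,y₁) be a point on the generalized Hessian curve E with x₁³ ≠ y₁³, and let [2]P = (x₃,y₃) be given by the doubling formula. Set r = x₁ + y₁. If 2r³ + d·r² − a ≠ 0, then x₃ + y₃ = −(r⁴ + 4a·r + a·d)/(2r³ + d·r² − a). -/
/-!
With `s = x₁y₁`, the doubling formula gives `x₃ + y₃ = -(a + r s) / (r² - s)`, and the curve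
equation in the symmetric functions `r, s` reads `s (d + 3r) = r³ + a`. Eliminating `s`
between the two gives the stated rational function of `r` alone.
-/

section GenHessian

variable {K : Type*} [Field K]

theorem add_sq_sub_mul_ne_zero_of_pow_three_ne {x y : K} (h : x ^ 3 ≠ y ^ 3) :
    (x + y) ^ 2 - x * y ≠ 0 := by
  intro h0
  apply h
  linear_combination (x - y) * h0

theorem genHessian_doubling_sum {a x y : K} (h : x ^ 3 ≠ y ^ 3) :
    y * (a - x ^ 3) / (x ^ 3 - y ^ 3) + x * (y ^ 3 - a) / (x ^ 3 - y ^ 3) =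
      -(a + x * y * (x + y)) / ((x + y) ^ 2 - x * y) := by
  rw [← add_div, div_eq_div_iff (sub_ne_zero.mpr h) (add_sq_sub_mul_ne_zero_of_pow_three_ne h)]
  ring

theorem genHessian_symmetric_form {a d x y : K} (hP : x ^ 3 + y ^ 3 + a = d * x * y) :
    x * y * (d + 3 * (x + y)) = (x + y) ^ 3 + a := by
  linear_combination -hP

end GenHessian

theorem genHessian_deg2_doubling_general {K : Type*} [Field K] (a d : K)
    (x1 y1 x3 y3 : K)
    (hP : x1 ^ 3 + y1 ^ 3 + a = d * x1 * y1)
    (hden : x1 ^ 3 ≠ y1 ^ 3)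
    (hx3 : x3 = y1 * (a - x1 ^ 3) / (x1 ^ 3 - y1 ^ 3))
    (hy3 : y3 = x1 * (y1 ^ 3 - a) / (x1 ^ 3 - y1 ^ 3))
    (r : K) (hr : r = x1 + y1)
    (hM0 : 2 * r ^ 3 + d * r ^ 2 - a ≠ 0) :
    x3 + y3 = -(r ^ 4 + 4 * a * r + a * d) / (2 * r ^ 3 + d * r ^ 2 - a) := by
  subst hx3 hy3 hr
  rw [genHessian_doubling_sum hden,
    div_eq_div_iff (add_sq_sub_mul_ne_zero_of_pow_three_ne hden) hM0]
  linear_combination -((x1 + y1) ^ 3 + a) * genHessian_symmetric_form hP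

/-- Doubling for the degree-2 compression `f₂(x,y) = x + y` on the
generalized Hessian curve `x³ + y³ + a = d·x·y`. -/
theorem genHessian_deg2_doubling {K : Type*} [Field K] (a d : K)
    (hchar2 : (2 : K) ≠ 0) (hchar3 : (3 : K) ≠ 0)
    (ha : a ≠ 0) (hd : d ^ 3 ≠ 27 * a)
    (x1 y1 x3 y3 : K)
    (hP : x1 ^ 3 + y1 ^ 3 + a = d * x1 * y1)
    (hden : x1 ^ 3 ≠ y1 ^ 3)
    (hx3 : x3 = y1 * (a - x1 ^ 3) / (x1 ^ 3 - y1 ^ 3))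
    (hy3 : y3 = x1 * (y1 ^ 3 - a) / (x1 ^ 3 - y1 ^ 3))
    (r : K) (hr : r = x1 + y1)
    (hM0 : 2 * r ^ 3 + d * r ^ 2 - a ≠ 0) :
    x3 + y3 = -(r ^ 4 + 4 * a * r + a * d) / (2 * r ^ 3 + d * r ^ 2 - a) :=
  genHessian_deg2_doubling_general a d x1 y1 x3 y3 hP hden hx3 hy3 r hr hM0
end

section
/- Let P=(x₁,y₁) and Q=(x₂,y₂) be points on the generalized Hessian curve E such that the denominators in the sum and difference formulas are nonzero, and let (x₃,y₃)=P+Q and (x₄,y₄)=P−Q. Set r_P = x₁y₁ and r_Q = x₂y₂. If r_P ≠ r_Q, then (x₃y₃)·(x₄y₄) = (r_P²·r_Q² − a·d·r_P·r_Q + a²·r_Q + a²·r_P)/(r_Q − r_P)². -/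
/-!
The `x`-numerators of `P + Q` and `P - Q` coincide, and on the curve the product of the two
denominators factors as `(r_P - r_Q)` times that common numerator `N` (so `N ≠ 0`). Hence
`(x₃y₃)(x₄y₄) = N² M / ((r_P - r_Q) N)²`, where `M` is the product of the two `y`-numerators,
and `M` is a polynomial in `r_P`, `r_Q` once `x₂³ + y₂³` is replaced by `d r_Q - a`.
-/

section GenHessian

variable {R : Type*} [CommRing R] {a d : R}

theorem genHessian_yNum_mul_yNum {x y : R} (h : x ^ 3 + y ^ 3 + a = d * x * y) (r : R) :
    (r * y ^ 2 - a * x) * (r * x ^ 2 - a * y) =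
      r ^ 2 * (x * y) ^ 2 - a * d * r * (x * y) + a ^ 2 * (x * y) + a ^ 2 * r := by
  linear_combination (-a * r) * h

theorem genHessian_den_mul_den {x1 y1 x2 y2 : R}
    (hP : x1 ^ 3 + y1 ^ 3 + a = d * x1 * y1) (hQ : x2 ^ 3 + y2 ^ 3 + a = d * x2 * y2) :
    (x1 * x2 ^ 2 - y2 * y1 ^ 2) * (x1 * y2 ^ 2 - x2 * y1 ^ 2) =
      (x1 * y1 - x2 * y2) * (a * y1 - x2 * y2 * x1 ^ 2) := by
  linear_combination (-x1 * y1 ^ 2) * hQ + (x2 * y2 * y1) * hP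

end GenHessian

theorem genHessian_deg6_diff_add_general {K : Type*} [Field K] (a d : K)
    (x1 y1 x2 y2 x3 y3 x4 y4 : K)
    (hP : x1 ^ 3 + y1 ^ 3 + a = d * x1 * y1)
    (hQ : x2 ^ 3 + y2 ^ 3 + a = d * x2 * y2)
    (hden1 : x1 * x2 ^ 2 - y2 * y1 ^ 2 ≠ 0)
    (hden2 : x1 * y2 ^ 2 - x2 * y1 ^ 2 ≠ 0)
    (hx3 : x3 = (a * y1 - x2 * y2 * x1 ^ 2) / (x1 * x2 ^ 2 - y2 * y1 ^ 2))
    (hy3 : y3 = (x1 * y1 * y2 ^ 2 - a * x2) / (x1 * x2 ^ 2 - y2 * y1 ^ 2))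
    (hx4 : x4 = (a * y1 - y2 * x2 * x1 ^ 2) / (x1 * y2 ^ 2 - x2 * y1 ^ 2))
    (hy4 : y4 = (x1 * y1 * x2 ^ 2 - a * y2) / (x1 * y2 ^ 2 - x2 * y1 ^ 2))
    (rP rQ : K) (hrP : rP = x1 * y1) (hrQ : rQ = x2 * y2) :
    (x3 * y3) * (x4 * y4) =
      (rP ^ 2 * rQ ^ 2 - a * d * rP * rQ + a ^ 2 * rQ + a ^ 2 * rP) / (rQ - rP) ^ 2 := by
  subst hx3 hy3 hx4 hy4 hrP hrQ
  set N := a * y1 - x2 * y2 * x1 ^ 2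
  have hden : (x1 * x2 ^ 2 - y2 * y1 ^ 2) * (x1 * y2 ^ 2 - x2 * y1 ^ 2) =
      (x1 * y1 - x2 * y2) * N := genHessian_den_mul_den hP hQ
  have hN : N ≠ 0 := right_ne_zero_of_mul (hden ▸ mul_ne_zero hden1 hden2)
  set M := (x1 * y1 * y2 ^ 2 - a * x2) * (x1 * y1 * x2 ^ 2 - a * y2)
  calc _ = N ^ 2 * M / ((x1 * x2 ^ 2 - y2 * y1 ^ 2) * (x1 * y2 ^ 2 - x2 * y1 ^ 2)) ^ 2 := by
        field_simp
        ring
    _ = N ^ 2 * M / (N ^ 2 * (x2 * y2 - x1 * y1) ^ 2) := by rw [hden]; ring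
    _ = M / (x2 * y2 - x1 * y1) ^ 2 := mul_div_mul_left _ _ (pow_ne_zero 2 hN)
    _ = _ := congrArg (· / _) (genHessian_yNum_mul_yNum hQ _)

/-- Differential addition for the degree-6 compression `f₆(x,y) = x·y` on the
generalized Hessian curve `x³ + y³ + a = d·x·y`. -/
theorem genHessian_deg6_diff_add {K : Type*} [Field K] (a d : K)
    (hchar2 : (2 : K) ≠ 0) (hchar3 : (3 : K) ≠ 0)
    (ha : a ≠ 0) (hd : d ^ 3 ≠ 27 * a)
    (x1 y1 x2 y2 x3 y3 x4 y4 : K)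
    (hP : x1 ^ 3 + y1 ^ 3 + a = d * x1 * y1)
    (hQ : x2 ^ 3 + y2 ^ 3 + a = d * x2 * y2)
    (hden1 : x1 * x2 ^ 2 - y2 * y1 ^ 2 ≠ 0)
    (hden2 : x1 * y2 ^ 2 - x2 * y1 ^ 2 ≠ 0)
    (hx3 : x3 = (a * y1 - x2 * y2 * x1 ^ 2) / (x1 * x2 ^ 2 - y2 * y1 ^ 2))
    (hy3 : y3 = (x1 * y1 * y2 ^ 2 - a * x2) / (x1 * x2 ^ 2 - y2 * y1 ^ 2))
    (hx4 : x4 = (a * y1 - y2 * x2 * x1 ^ 2) / (x1 * y2 ^ 2 - x2 * y1 ^ 2))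
    (hy4 : y4 = (x1 * y1 * x2 ^ 2 - a * y2) / (x1 * y2 ^ 2 - x2 * y1 ^ 2))
    (rP rQ : K) (hrP : rP = x1 * y1) (hrQ : rQ = x2 * y2)
    (hne : rP ≠ rQ) :
    (x3 * y3) * (x4 * y4) =
      (rP ^ 2 * rQ ^ 2 - a * d * rP * rQ + a ^ 2 * rQ + a ^ 2 * rP) / (rQ - rP) ^ 2 :=
  genHessian_deg6_diff_add_general a d x1 y1 x2 y2 x3 y3 x4 y4 hP hQ hden1 hden2 hx3 hy3 hx4 hy4 rP
    rQ hrP hrQ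
end

section
/- Let P=(x₁,y₁) be a point on the generalized Hessian curve E with x₁³ ≠ y₁³, and let [2]P = (x₃,y₃) be given by the doubling formula. Set r = x₁y₁. If (d·r − a)² − 4r³ ≠ 0, then x₃·y₃ = r·(a·(d·r − a) − r³ − a²)/((d·r − a)² − 4r³). -/
/-- Doubling for the degree-6 compression `f₆(x,y) = x·y` on the generalized
Hessian curve `x³ + y³ + a = d·x·y`. -/
theorem genHessian_deg6_doubling {K : Type*} [Field K] (a d : K)
    (hchar2 : (2 : K) ≠ 0) (hchar3 : (3 : K) ≠ 0)
    (ha : a ≠ 0) (hd : d ^ 3 ≠ 27 * a)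
    (x1 y1 x3 y3 : K)
    (hP : x1 ^ 3 + y1 ^ 3 + a = d * x1 * y1)
    (hden : x1 ^ 3 ≠ y1 ^ 3)
    (hx3 : x3 = y1 * (a - x1 ^ 3) / (x1 ^ 3 - y1 ^ 3))
    (hy3 : y3 = x1 * (y1 ^ 3 - a) / (x1 ^ 3 - y1 ^ 3))
    (r : K) (hr : r = x1 * y1)
    (hM0 : (d * r - a) ^ 2 - 4 * r ^ 3 ≠ 0) :
    x3 * y3 = r * (a * (d * r - a) - r ^ 3 - a ^ 2) / ((d * r - a) ^ 2 - 4 * r ^ 3) := by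
  subst hx3 hy3 hr
  rw [div_mul_div_comm]
  have hnum : y1 * (a - x1 ^ 3) * (x1 * (y1 ^ 3 - a)) =
      x1 * y1 * (a * (d * (x1 * y1) - a) - (x1 * y1) ^ 3 - a ^ 2) := by
    linear_combination x1 * y1 * a * hP
  have hden2 : (x1 ^ 3 - y1 ^ 3) * (x1 ^ 3 - y1 ^ 3) =
      (d * (x1 * y1) - a) ^ 2 - 4 * (x1 * y1) ^ 3 := by
    linear_combination (x1 ^ 3 + y1 ^ 3 + d * (x1 * y1) - a) * hP
  rw [hnum, hden2]
end

section
/- Assume ω ∈ K satisfies ω² + ω + 1 = 0. Let P = (x,y) and Q = (u,v) be points on the generalized Hessian curve E with x, y, u, v all nonzero. Then u·v = x·y if and only if (u,v) belongs to the set S = {(x,y), (y,x), (ωx, ω²y), (ω²x, ωy), (ωy, ω²x), (ω²y, ωx)}. In particular, the compression function f₆(x,y) = x·y has degree 6. -/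
/-- The compression function `f₆(x,y) = x·y` on the generalized Hessian curve
`x³ + y³ + a = d·x·y` has degree 6: two points (with nonzero coordinates)
compress to the same value iff they are related by `±` and translation by the
3-torsion point `(1 : -ω : 0)`. -/
theorem genHessian_deg6_compression_fibre {K : Type*} [Field K] (a d ω : K)
    (hchar2 : (2 : K) ≠ 0) (hchar3 : (3 : K) ≠ 0)
    (ha : a ≠ 0) (hd : d ^ 3 ≠ 27 * a)
    (hω : ω ^ 2 + ω + 1 = 0)
    (x y u v : K)
    (hx : x ≠ 0) (hy : y ≠ 0) (hu : u ≠ 0) (hv : v ≠ 0)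
    (hP : x ^ 3 + y ^ 3 + a = d * x * y)
    (hQ : u ^ 3 + v ^ 3 + a = d * u * v) :
    u * v = x * y ↔
      ((u, v) = (x, y) ∨ (u, v) = (y, x) ∨
        (u, v) = (ω * x, ω ^ 2 * y) ∨ (u, v) = (ω ^ 2 * x, ω * y) ∨
        (u, v) = (ω * y, ω ^ 2 * x) ∨ (u, v) = (ω ^ 2 * y, ω * x)) := by
  have hω3 : ω ^ 3 = 1 := by linear_combination (ω - 1) * hω
  have hω0 : ω ≠ 0 := by
    intro h0; rw [h0] at hω; simp at hω
  constructor
  · intro h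
    have h1 : u ^ 3 + v ^ 3 = x ^ 3 + y ^ 3 := by
      linear_combination hQ - hP + d * h
    have key : (u ^ 3 - x ^ 3) * (u ^ 3 - y ^ 3) = 0 := by
      linear_combination u ^ 3 * h1 - ((x * y) ^ 2 + x * y * (u * v) + (u * v) ^ 2) * h
    rcases mul_eq_zero.mp key with h3 | h3
    · have hfac : (u - x) * ((u - ω * x) * (u - ω ^ 2 * x)) = 0 := by
        linear_combination h3 + ((u * x ^ 2 - u ^ 2 * x) + (ω - 1) * (u * x ^ 2 - x ^ 3)) * hω
      rcases mul_eq_zero.mp hfac with h4 | h4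
      · have hux : u = x := sub_eq_zero.mp h4
        have hvy : v = y := mul_left_cancel₀ hx (by linear_combination h - v * hux)
        exact Or.inl (by rw [hux, hvy])
      · rcases mul_eq_zero.mp h4 with h5 | h5
        · have hux : u = ω * x := sub_eq_zero.mp h5
          have hvy : v = ω ^ 2 * y :=
            mul_left_cancel₀ (mul_ne_zero hω0 hx)
              (by linear_combination h - v * hux - x * y * hω3)
          exact Or.inr (Or.inr (Or.inl (by rw [hux, hvy])))
        · have hux : u = ω ^ 2 * x := sub_eq_zero.mp h5
          have hvy : v = ω * y :=
            mul_left_cancel₀ (mul_ne_zero (pow_ne_zero 2 hω0) hx)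
              (by linear_combination h - v * hux - x * y * hω3)
          exact Or.inr (Or.inr (Or.inr (Or.inl (by rw [hux, hvy]))))
    · have hfac : (u - y) * ((u - ω * y) * (u - ω ^ 2 * y)) = 0 := by
        linear_combination h3 + ((u * y ^ 2 - u ^ 2 * y) + (ω - 1) * (u * y ^ 2 - y ^ 3)) * hω
      rcases mul_eq_zero.mp hfac with h4 | h4
      · have hux : u = y := sub_eq_zero.mp h4
        have hvy : v = x := mul_left_cancel₀ hy (by linear_combination h - v * hux)
        exact Or.inr (Or.inl (by rw [hux, hvy]))
      · rcases mul_eq_zero.mp h4 with h5 | h5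
        · have hux : u = ω * y := sub_eq_zero.mp h5
          have hvy : v = ω ^ 2 * x :=
            mul_left_cancel₀ (mul_ne_zero hω0 hy)
              (by linear_combination h - v * hux - x * y * hω3)
          exact Or.inr (Or.inr (Or.inr (Or.inr (Or.inl (by rw [hux, hvy])))))
        · have hux : u = ω ^ 2 * y := sub_eq_zero.mp h5
          have hvy : v = ω * x :=
            mul_left_cancel₀ (mul_ne_zero (pow_ne_zero 2 hω0) hy)
              (by linear_combination h - v * hux - x * y * hω3)
          exact Or.inr (Or.inr (Or.inr (Or.inr (Or.inr (by rw [hux, hvy])))))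
  · rintro (h | h | h | h | h | h) <;>
      obtain ⟨rfl, rfl⟩ := Prod.mk.injEq .. ▸ h <;>
      first
        | ring1
        | linear_combination x * y * hω3
end

section
/- Assume ω ∈ K satisfies ω² + ω + 1 = 0. Let P = (x,y) and Q = (u,v) be points on the Hessian curve E with x, y, u, v all nonzero. Then f₁₈(u,v) = f₁₈(x,y) if and only if (u,v) belongs to the 18-element set S = { (x,y), (x/y, 1/y), (y,x), (y/x, 1/x), (1/y, x/y), (1/x, y/x) } ∪ { (ω·s, ω²·t) : (s,t) in the previous six pairs } ∪ { (ω²·s, ω·t) : (s,t) in the first six pairs }. In particular, f₁₈ is a compression function of degree 18 on E. -/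
/-- The degree-18 compression function on the Hessian curve. -/
def hessF18 {K : Type*} [Field K] (x y : K) : K :=
  (x ^ 3 * y ^ 3 + x ^ 3 + y ^ 3) / (x ^ 2 * y ^ 2)

/-!
On `E` we have `x³ + y³ = dxy - 1`, so `f₁₈(x,y) = t + d/t - 1/t²` depends only on `t = xy`.
Two values `s, t` give the same compression iff `s = t` or `t²s² - (dt - 1)s + t = 0`, and by
Vieta the roots of the latter are `x/y²` and `y/x²`, the products of coordinates of the points
`(x/y, 1/y)` and `(y/x, 1/x)` of `E`. Finally, a point `(u,v)` of `E` with `uv = ab` for a point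
`(a,b)` of `E` also has `u³ + v³ = a³ + b³`, so `{u³, v³} = {a³, b³}`; taking cube roots leaves
six choices for `(u,v)`. Conversely `f₁₈` is invariant under the swap `(x,y) ↦ (y,x)`, the map
`(x,y) ↦ (x/y, 1/y)` and the twists `(x,y) ↦ (ωx, ω²y)`, which generate the 18 points.
-/

section

variable {K : Type*} [Field K]

def OnHessian (d x y : K) : Prop :=
  x ^ 3 + y ^ 3 + 1 = d * x * y

theorem OnHessian.symm {d x y : K} (h : OnHessian d x y) : OnHessian d y x := by
  unfold OnHessian at *
  linear_combination h

theorem OnHessian.div_one_div {d x y : K} (h : OnHessian d x y) (hy : y ≠ 0) :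
    OnHessian d (x / y) (1 / y) := by
  unfold OnHessian at *
  field_simp
  linear_combination h

theorem hessF18_comm (a b : K) : hessF18 a b = hessF18 b a := by
  unfold hessF18
  ring_nf

theorem hessF18_div_one_div (a : K) {b : K} (hb : b ≠ 0) :
    hessF18 (a / b) (1 / b) = hessF18 a b := by
  unfold hessF18
  field_simp
  ring

theorem hessF18_one_div_div (a : K) {b : K} (hb : b ≠ 0) :
    hessF18 (1 / b) (a / b) = hessF18 a b := by
  rw [hessF18_comm, hessF18_div_one_div a hb]

theorem hessF18_mul_sq_mul {ω : K} (hω : ω ^ 3 = 1) (a b : K) :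
    hessF18 (ω * a) (ω ^ 2 * b) = hessF18 a b := by
  unfold hessF18
  congr 1
  · linear_combination (a ^ 3 * b ^ 3 * (ω ^ 6 + ω ^ 3 + 1) + a ^ 3 + (ω ^ 3 + 1) * b ^ 3) * hω
  · linear_combination ((ω ^ 3 + 1) * a ^ 2 * b ^ 2) * hω

theorem hessF18_sq_mul_mul {ω : K} (hω : ω ^ 3 = 1) (a b : K) :
    hessF18 (ω ^ 2 * a) (ω * b) = hessF18 a b := by
  have hω4 : (ω ^ 2) ^ 2 = ω := by linear_combination ω * hω
  have hω6 : (ω ^ 2) ^ 3 = 1 := by linear_combination (ω ^ 3 + 1) * hω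
  have := hessF18_mul_sq_mul hω6 a b
  rwa [hω4] at this

theorem mul_eq_of_hessF18_eq {d x y u v : K} (hx : x ≠ 0) (hy : y ≠ 0) (hu : u ≠ 0)
    (hv : v ≠ 0) (hP : OnHessian d x y) (hQ : OnHessian d u v) (h : hessF18 u v = hessF18 x y) :
    u * v = x * y ∨ u * v = x / y * (1 / y) ∨ u * v = y / x * (1 / x) := by
  unfold hessF18 at h
  unfold OnHessian at hP hQ
  rw [div_eq_div_iff (by positivity) (by positivity)] at h
  have hfactor : (u * v - x * y) * ((u * v * y ^ 2 - x) * (u * v * x ^ 2 - y)) = 0 := by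
    linear_combination h + (u * v * x * y) * hP - (x ^ 2 * y ^ 2) * hQ
  rcases mul_eq_zero.mp hfactor with h | h
  · exact Or.inl (sub_eq_zero.mp h)
  rcases mul_eq_zero.mp h with h | h
  · right; left
    field_simp
    linear_combination h
  · right; right
    field_simp
    linear_combination h

theorem eq_or_eq_mul_or_eq_sq_mul_of_pow_three_eq {ω a b : K} (hω : ω ^ 2 + ω + 1 = 0)
    (h : a ^ 3 = b ^ 3) : a = b ∨ a = ω * b ∨ a = ω ^ 2 * b := by
  have hfactor : (a - b) * ((a - ω * b) * (a - ω ^ 2 * b)) = 0 := by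
    linear_combination h + (-(a ^ 2 * b) + ω * a * b ^ 2 - (ω - 1) * b ^ 3) * hω
  simpa only [mul_eq_zero, sub_eq_zero] using hfactor

theorem prod_eq_of_mul_eq {a b c c' u v : K} (ha : a ≠ 0) (hc : c * c' = 1) (hu : u = c * a)
    (h : u * v = a * b) : (u, v) = (c * a, c' * b) := by
  subst hu
  refine Prod.ext rfl (mul_left_cancel₀ ha ?_)
  linear_combination c' * h - a * v * hc

theorem eq_or_of_mul_eq_of_pow_three_add_eq {ω a b u v : K} (hω : ω ^ 2 + ω + 1 = 0)
    (ha : a ≠ 0) (hb : b ≠ 0) (hmul : u * v = a * b) (hcube : u ^ 3 + v ^ 3 = a ^ 3 + b ^ 3) :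
    (u, v) = (a, b) ∨ (u, v) = (ω * a, ω ^ 2 * b) ∨ (u, v) = (ω ^ 2 * a, ω * b) ∨
      (u, v) = (b, a) ∨ (u, v) = (ω * b, ω ^ 2 * a) ∨ (u, v) = (ω ^ 2 * b, ω * a) := by
  have hω3 : ω * ω ^ 2 = 1 := by linear_combination (ω - 1) * hω
  have hω3' : ω ^ 2 * ω = 1 := by linear_combination (ω - 1) * hω
  have hroots : (u ^ 3 - a ^ 3) * (u ^ 3 - b ^ 3) = 0 := by
    linear_combination u ^ 3 * hcube - (u ^ 2 * v ^ 2 + u * v * a * b + a ^ 2 * b ^ 2) * hmul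
  rcases mul_eq_zero.mp hroots with h | h
  · rcases eq_or_eq_mul_or_eq_sq_mul_of_pow_three_eq hω (sub_eq_zero.mp h) with h | h | h
    · exact Or.inl (Prod.ext h (mul_left_cancel₀ ha (h ▸ hmul)))
    · exact Or.inr <| Or.inl <| prod_eq_of_mul_eq ha hω3 h hmul
    · exact Or.inr <| Or.inr <| Or.inl <| prod_eq_of_mul_eq ha hω3' h hmul
  · rw [mul_comm a b] at hmul
    rcases eq_or_eq_mul_or_eq_sq_mul_of_pow_three_eq hω (sub_eq_zero.mp h) with h | h | h
    · exact Or.inr <| Or.inr <| Or.inr <| Or.inl (Prod.ext h (mul_left_cancel₀ hb (h ▸ hmul)))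
    · exact Or.inr <| Or.inr <| Or.inr <| Or.inr <| Or.inl <| prod_eq_of_mul_eq hb hω3 h hmul
    · exact Or.inr <| Or.inr <| Or.inr <| Or.inr <| Or.inr <| prod_eq_of_mul_eq hb hω3' h hmul

theorem OnHessian.eq_or_of_mul_eq {d ω a b u v : K} (hω : ω ^ 2 + ω + 1 = 0) (ha : a ≠ 0)
    (hb : b ≠ 0) (hab : OnHessian d a b) (huv : OnHessian d u v) (hmul : u * v = a * b) :
    (u, v) = (a, b) ∨ (u, v) = (ω * a, ω ^ 2 * b) ∨ (u, v) = (ω ^ 2 * a, ω * b) ∨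
      (u, v) = (b, a) ∨ (u, v) = (ω * b, ω ^ 2 * a) ∨ (u, v) = (ω ^ 2 * b, ω * a) := by
  refine eq_or_of_mul_eq_of_pow_three_add_eq hω ha hb hmul ?_
  unfold OnHessian at hab huv
  linear_combination huv - hab + d * hmul

end

theorem hessian_deg18_compression_fibre_general {K : Type*} [Field K] (d ω : K)
    (hω : ω ^ 2 + ω + 1 = 0)
    (x y u v : K)
    (hx : x ≠ 0) (hy : y ≠ 0) (hu : u ≠ 0) (hv : v ≠ 0)
    (hP : x ^ 3 + y ^ 3 + 1 = d * x * y)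
    (hQ : u ^ 3 + v ^ 3 + 1 = d * u * v) :
    hessF18 u v = hessF18 x y ↔
      ((u, v) = (x, y) ∨ (u, v) = (x / y, 1 / y) ∨ (u, v) = (y, x) ∨
        (u, v) = (y / x, 1 / x) ∨ (u, v) = (1 / y, x / y) ∨ (u, v) = (1 / x, y / x) ∨
        (u, v) = (ω * x, ω ^ 2 * y) ∨ (u, v) = (ω * (x / y), ω ^ 2 * (1 / y)) ∨
        (u, v) = (ω * y, ω ^ 2 * x) ∨ (u, v) = (ω * (y / x), ω ^ 2 * (1 / x)) ∨
        (u, v) = (ω * (1 / y), ω ^ 2 * (x / y)) ∨ (u, v) = (ω * (1 / x), ω ^ 2 * (y / x)) ∨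
        (u, v) = (ω ^ 2 * x, ω * y) ∨ (u, v) = (ω ^ 2 * (x / y), ω * (1 / y)) ∨
        (u, v) = (ω ^ 2 * y, ω * x) ∨ (u, v) = (ω ^ 2 * (y / x), ω * (1 / x)) ∨
        (u, v) = (ω ^ 2 * (1 / y), ω * (x / y)) ∨ (u, v) = (ω ^ 2 * (1 / x), ω * (y / x))) := by
  have hω3 : ω ^ 3 = 1 := by linear_combination (ω - 1) * hω
  have hP : OnHessian d x y := hP
  have hQ : OnHessian d u v := hQ
  constructor
  · intro h
    rcases mul_eq_of_hessF18_eq hx hy hu hv hP hQ h with hmul | hmul | hmul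
    · rcases hP.eq_or_of_mul_eq hω hx hy hQ hmul with h | h | h | h | h | h <;>
        simp only [h, true_or, or_true]
    · rcases (hP.div_one_div hy).eq_or_of_mul_eq hω (div_ne_zero hx hy) (one_div_ne_zero hy) hQ
        hmul with
        h | h | h | h | h | h <;> simp only [h, true_or, or_true]
    · rcases (hP.symm.div_one_div hx).eq_or_of_mul_eq hω (div_ne_zero hy hx) (one_div_ne_zero hx) hQ
        hmul with
        h | h | h | h | h | h <;> simp only [h, true_or, or_true]
  · rintro (h | h | h | h | h | h | h | h | h | h | h | h | h | h | h | h | h | h) <;>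
      rw [(Prod.mk.inj h).1, (Prod.mk.inj h).2] <;>
      simp only [hessF18_mul_sq_mul hω3, hessF18_sq_mul_mul hω3, hessF18_div_one_div _ hx,
        hessF18_div_one_div _ hy, hessF18_one_div_div _ hx, hessF18_one_div_div _ hy,
        hessF18_comm y x]

/-- The compression function
`f₁₈(x,y) = (x³y³ + x³ + y³)/(x²y²)` on the Hessian curve
`x³ + y³ + 1 = d·x·y` has degree 18: two points (with nonzero coordinates)
compress to the same value iff they belong to the 18-element orbit. -/
theorem hessian_deg18_compression_fibre {K : Type*} [Field K] (d ω : K)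
    (hchar2 : (2 : K) ≠ 0) (hchar3 : (3 : K) ≠ 0)
    (hd : d ^ 3 ≠ 27)
    (hω : ω ^ 2 + ω + 1 = 0)
    (x y u v : K)
    (hx : x ≠ 0) (hy : y ≠ 0) (hu : u ≠ 0) (hv : v ≠ 0)
    (hP : x ^ 3 + y ^ 3 + 1 = d * x * y)
    (hQ : u ^ 3 + v ^ 3 + 1 = d * u * v) :
    hessF18 u v = hessF18 x y ↔
      ((u, v) = (x, y) ∨ (u, v) = (x / y, 1 / y) ∨ (u, v) = (y, x) ∨
        (u, v) = (y / x, 1 / x) ∨ (u, v) = (1 / y, x / y) ∨ (u, v) = (1 / x, y / x) ∨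
        (u, v) = (ω * x, ω ^ 2 * y) ∨ (u, v) = (ω * (x / y), ω ^ 2 * (1 / y)) ∨
        (u, v) = (ω * y, ω ^ 2 * x) ∨ (u, v) = (ω * (y / x), ω ^ 2 * (1 / x)) ∨
        (u, v) = (ω * (1 / y), ω ^ 2 * (x / y)) ∨ (u, v) = (ω * (1 / x), ω ^ 2 * (y / x)) ∨
        (u, v) = (ω ^ 2 * x, ω * y) ∨ (u, v) = (ω ^ 2 * (x / y), ω * (1 / y)) ∨
        (u, v) = (ω ^ 2 * y, ω * x) ∨ (u, v) = (ω ^ 2 * (y / x), ω * (1 / x)) ∨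
        (u, v) = (ω ^ 2 * (1 / y), ω * (x / y)) ∨ (u, v) = (ω ^ 2 * (1 / x), ω * (y / x))) :=
  hessian_deg18_compression_fibre_general d ω hω x y u v hx hy hu hv hP hQ
end

section
/- Let P=(x₁,y₁) and Q=(x₂,y₂) be points on the Hessian curve E with all coordinates of P, Q, P+Q and P−Q nonzero and with the denominators in the sum and difference formulas nonzero; let (x₃,y₃)=P+Q and (x₄,y₄)=P−Q. Set r_P = f₁₈(x₁,y₁) and r_Q = f₁₈(x₂,y₂). If r_P ≠ r_Q, then f₁₈(x₃,y₃)·f₁₈(x₄,y₄) = (r_P²·r_Q² + 9d·r_P·r_Q + (−4d³ − 27)·r_P + (−4d³ − 27)·r_Q + d⁵ + 27d²)/(r_P − r_Q)². -/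
set_option maxHeartbeats 4000000

private lemma hessian_core {K : Type*} [Field K] (d a b : K) :
    ((a + b + a^2*b^2 - d*(a*b))^3
      + d*(a + b + a^2*b^2 - d*(a*b))*(-1 + 2*a*b^2 + 2*a^2*b + d*(a+b) - d^2*(a*b))^2
      - 2*d*(a + b + a^2*b^2 - d*(a*b))^2*(a-b)^2
      + d^2*(a + b + a^2*b^2 - d*(a*b))*((a-b)^2)^2
      - (-1 + 2*a*b^2 + 2*a^2*b + d*(a+b) - d^2*(a*b))^3
      + 3*(-1 + 2*a*b^2 + 2*a^2*b + d*(a+b) - d^2*(a*b))*(a + b + a^2*b^2 - d*(a*b))*(a-b)^2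
      - d*(-1 + 2*a*b^2 + 2*a^2*b + d*(a+b) - d^2*(a*b))*((a-b)^2)^2
      + ((a-b)^2)^3)
    * ((a^3 + d*a - 1)*b^2 - (b^3 + d*b - 1)*a^2)^2
    = ((a^3 + d*a - 1)^2*(b^3 + d*b - 1)^2
        + 9*d*(a^3 + d*a - 1)*(b^3 + d*b - 1)*(a^2*b^2)
        + (-(4*d^3) - 27)*((a^3 + d*a - 1)*b^2 + (b^3 + d*b - 1)*a^2)*(a^2*b^2)
        + (d^5 + 27*d^2)*(a^2*b^2)^2)
      * ((a-b)^2 * (a + b + a^2*b^2 - d*(a*b))^2) := by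
  ring

private lemma hessian_final {K : Type*} [Field K] (d a b e1 e2 rP rQ : K)
    (ha : a ≠ 0) (hb : b ≠ 0) (hab : a - b ≠ 0)
    (he2 : e2 ≠ 0) (hr : rP - rQ ≠ 0)
    (hu : rP * a^2 = a^3 + d*a - 1) (hv : rQ * b^2 = b^3 + d*b - 1)
    (h1 : e1 * (a-b)^2 = -1 + 2*a*b^2 + 2*a^2*b + d*(a+b) - d^2*(a*b))
    (h2 : e2 * (a-b)^2 = a + b + a^2*b^2 - d*(a*b)) :
    (e2^3 + d*e2*e1^2 - 2*d*e2^2 + d^2*e2 - e1^3 + 3*e1*e2 - d*e1 + 1)/e2^2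
      = (rP^2*rQ^2 + 9*d*rP*rQ + (-(4*d^3) - 27)*rP + (-(4*d^3) - 27)*rQ
          + d^5 + 27*d^2)/(rP - rQ)^2 := by
  have hab2 : (a-b)^2 ≠ 0 := pow_ne_zero _ hab
  have hPp : a + b + a^2*b^2 - d*(a*b) ≠ 0 := by
    intro h
    exact he2 ((mul_eq_zero.mp (h2.trans h)).resolve_right hab2)
  have hW : (rP - rQ)*(a^2*b^2) = (a^3 + d*a - 1)*b^2 - (b^3 + d*b - 1)*a^2 := by
    linear_combination b^2 * hu - a^2 * hv
  have hWne : (a^3 + d*a - 1)*b^2 - (b^3 + d*b - 1)*a^2 ≠ 0 := by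
    rw [← hW]
    exact mul_ne_zero hr (mul_ne_zero (pow_ne_zero 2 ha) (pow_ne_zero 2 hb))
  have hLHS : (e2^3 + d*e2*e1^2 - 2*d*e2^2 + d^2*e2 - e1^3 + 3*e1*e2 - d*e1 + 1)/e2^2
      = ((a + b + a^2*b^2 - d*(a*b))^3
          + d*(a + b + a^2*b^2 - d*(a*b))*(-1 + 2*a*b^2 + 2*a^2*b + d*(a+b) - d^2*(a*b))^2
          - 2*d*(a + b + a^2*b^2 - d*(a*b))^2*(a-b)^2
          + d^2*(a + b + a^2*b^2 - d*(a*b))*((a-b)^2)^2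
          - (-1 + 2*a*b^2 + 2*a^2*b + d*(a+b) - d^2*(a*b))^3
          + 3*(-1 + 2*a*b^2 + 2*a^2*b + d*(a+b) - d^2*(a*b))*(a + b + a^2*b^2 - d*(a*b))*(a-b)^2
          - d*(-1 + 2*a*b^2 + 2*a^2*b + d*(a+b) - d^2*(a*b))*((a-b)^2)^2
          + ((a-b)^2)^3)
        / ((a-b)^2 * (a + b + a^2*b^2 - d*(a*b))^2) := by
    rw [div_eq_div_iff (pow_ne_zero 2 he2) (mul_ne_zero hab2 (pow_ne_zero 2 hPp))]
    rw [← h1, ← h2]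
    ring
  have hRHS : (rP^2*rQ^2 + 9*d*rP*rQ + (-(4*d^3) - 27)*rP + (-(4*d^3) - 27)*rQ
          + d^5 + 27*d^2)/(rP - rQ)^2
      = ((a^3 + d*a - 1)^2*(b^3 + d*b - 1)^2
          + 9*d*(a^3 + d*a - 1)*(b^3 + d*b - 1)*(a^2*b^2)
          + (-(4*d^3) - 27)*((a^3 + d*a - 1)*b^2 + (b^3 + d*b - 1)*a^2)*(a^2*b^2)
          + (d^5 + 27*d^2)*(a^2*b^2)^2)
        / (((a^3 + d*a - 1)*b^2 - (b^3 + d*b - 1)*a^2))^2 := by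
    rw [div_eq_div_iff (pow_ne_zero 2 hr) (pow_ne_zero 2 hWne)]
    rw [← hW, ← hu, ← hv]
    ring
  rw [hLHS, hRHS,
    div_eq_div_iff (mul_ne_zero hab2 (pow_ne_zero 2 hPp)) (pow_ne_zero 2 hWne)]
  linear_combination hessian_core d a b

/-- Differential addition for the degree-18 compression
`f₁₈(x,y) = (x³y³ + x³ + y³)/(x²y²)` on the Hessian curve `x³ + y³ + 1 = d·x·y`. -/
theorem hessian_deg18_diff_add {K : Type*} [Field K] (d : K)
    (hchar2 : (2 : K) ≠ 0) (hchar3 : (3 : K) ≠ 0)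
    (hd : d ^ 3 ≠ 27)
    (x1 y1 x2 y2 x3 y3 x4 y4 : K)
    (hx1 : x1 ≠ 0) (hy1 : y1 ≠ 0) (hx2 : x2 ≠ 0) (hy2 : y2 ≠ 0)
    (hx3ne : x3 ≠ 0) (hy3ne : y3 ≠ 0) (hx4ne : x4 ≠ 0) (hy4ne : y4 ≠ 0)
    (hP : x1 ^ 3 + y1 ^ 3 + 1 = d * x1 * y1)
    (hQ : x2 ^ 3 + y2 ^ 3 + 1 = d * x2 * y2)
    (hden1 : x1 * x2 ^ 2 - y2 * y1 ^ 2 ≠ 0)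
    (hden2 : x1 * y2 ^ 2 - x2 * y1 ^ 2 ≠ 0)
    (hx3 : x3 = (y1 - x2 * y2 * x1 ^ 2) / (x1 * x2 ^ 2 - y2 * y1 ^ 2))
    (hy3 : y3 = (x1 * y1 * y2 ^ 2 - x2) / (x1 * x2 ^ 2 - y2 * y1 ^ 2))
    (hx4 : x4 = (y1 - y2 * x2 * x1 ^ 2) / (x1 * y2 ^ 2 - x2 * y1 ^ 2))
    (hy4 : y4 = (x1 * y1 * x2 ^ 2 - y2) / (x1 * y2 ^ 2 - x2 * y1 ^ 2))
    (rP rQ : K) (hrP : rP = hessF18 x1 y1) (hrQ : rQ = hessF18 x2 y2)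
    (hne : rP ≠ rQ) :
    hessF18 x3 y3 * hessF18 x4 y4 =
      (rP ^ 2 * rQ ^ 2 + 9 * d * rP * rQ + (-(4 * d ^ 3) - 27) * rP
          + (-(4 * d ^ 3) - 27) * rQ + d ^ 5 + 27 * d ^ 2) / (rP - rQ) ^ 2 := by
  have e3 : x3 * (x1 * x2 ^ 2 - y2 * y1 ^ 2) = y1 - x2 * y2 * x1 ^ 2 := by
    rw [hx3]; exact div_mul_cancel₀ _ hden1
  have e3y : y3 * (x1 * x2 ^ 2 - y2 * y1 ^ 2) = x1 * y1 * y2 ^ 2 - x2 := by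
    rw [hy3]; exact div_mul_cancel₀ _ hden1
  have e4 : x4 * (x1 * y2 ^ 2 - x2 * y1 ^ 2) = y1 - y2 * x2 * x1 ^ 2 := by
    rw [hx4]; exact div_mul_cancel₀ _ hden2
  have e4y : y4 * (x1 * y2 ^ 2 - x2 * y1 ^ 2) = x1 * y1 * x2 ^ 2 - y2 := by
    rw [hy4]; exact div_mul_cancel₀ _ hden2
  -- curve membership of the sum and the difference
  have hc3 : x3 ^ 3 + y3 ^ 3 + 1 = d * x3 * y3 := by
    apply mul_left_cancel₀ (pow_ne_zero 3 hden1)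
    linear_combination
      ((x3*(x1*x2^2 - y2*y1^2))^2 + (x3*(x1*x2^2 - y2*y1^2))*(y1 - x2*y2*x1^2)
        + (y1 - x2*y2*x1^2)^2 - d*(x1*x2^2 - y2*y1^2)*(y3*(x1*x2^2 - y2*y1^2))) * e3
      + ((y3*(x1*x2^2 - y2*y1^2))^2 + (y3*(x1*x2^2 - y2*y1^2))*(x1*y1*y2^2 - x2)
        + (x1*y1*y2^2 - x2)^2 - d*(x1*x2^2 - y2*y1^2)*(y1 - x2*y2*x1^2)) * e3y
      + ((1)*x2^3*y2^3 + (1)*x2^6 + (1)*y1^3*y2^6 + (1)*y1^3*x2^3*y2^3 + (3)*x1*y1*x2^2*y2^2 + (-1)*x1^3*x2^3*y2^3 + (-1)*d*x2^4*y2 + (-1)*d*y1^3*x2*y2^4) * hP + ((-1)*x2^3 + (1)*y1^3 + (-1)*y1^3*y2^3 + (-1)*y1^3*x2^3 + (-1)*y1^6*y2^3 + (-3)*x1^2*y1^2*x2*y2 + (1)*d*x1*y1*x2^3 + (1)*d*x1*y1^4*y2^3) * hQ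
  have hc4 : x4 ^ 3 + y4 ^ 3 + 1 = d * x4 * y4 := by
    apply mul_left_cancel₀ (pow_ne_zero 3 hden2)
    linear_combination
      ((x4*(x1*y2^2 - x2*y1^2))^2 + (x4*(x1*y2^2 - x2*y1^2))*(y1 - y2*x2*x1^2)
        + (y1 - y2*x2*x1^2)^2 - d*(x1*y2^2 - x2*y1^2)*(y4*(x1*y2^2 - x2*y1^2))) * e4
      + ((y4*(x1*y2^2 - x2*y1^2))^2 + (y4*(x1*y2^2 - x2*y1^2))*(x1*y1*x2^2 - y2)
        + (x1*y1*x2^2 - y2)^2 - d*(x1*y2^2 - x2*y1^2)*(y1 - y2*x2*x1^2)) * e4y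
      + ((1)*y2^6 + (1)*x2^3*y2^3 + (1)*y1^3*x2^3*y2^3 + (1)*y1^3*x2^6 + (3)*x1*y1*x2^2*y2^2 + (-1)*x1^3*x2^3*y2^3 + (-1)*d*x2*y2^4 + (-1)*d*y1^3*x2^4*y2) * hP + ((-1)*y2^3 + (1)*y1^3 + (-1)*y1^3*y2^3 + (-1)*y1^3*x2^3 + (-1)*y1^6*x2^3 + (-3)*x1^2*y1^2*x2*y2 + (1)*d*x1*y1*y2^3 + (1)*d*x1*y1^4*x2^3) * hQ
  -- compression in terms of the coordinate product
  have hf1 : hessF18 x1 y1 = ((x1*y1)^3 + d*(x1*y1) - 1) / ((x1*y1)^2) := by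
    rw [hessF18]; congr 1
    · linear_combination hP
    · ring
  have hf2 : hessF18 x2 y2 = ((x2*y2)^3 + d*(x2*y2) - 1) / ((x2*y2)^2) := by
    rw [hessF18]; congr 1
    · linear_combination hQ
    · ring
  have hf3 : hessF18 x3 y3 = ((x3*y3)^3 + d*(x3*y3) - 1) / ((x3*y3)^2) := by
    rw [hessF18]; congr 1
    · linear_combination hc3
    · ring
  have hf4 : hessF18 x4 y4 = ((x4*y4)^3 + d*(x4*y4) - 1) / ((x4*y4)^2) := by
    rw [hessF18]; congr 1
    · linear_combination hc4
    · ring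
  have ha : x1 * y1 ≠ 0 := mul_ne_zero hx1 hy1
  have hb : x2 * y2 ≠ 0 := mul_ne_zero hx2 hy2
  have hs3 : x3 * y3 ≠ 0 := mul_ne_zero hx3ne hy3ne
  have hs4 : x4 * y4 ≠ 0 := mul_ne_zero hx4ne hy4ne
  have habne : x1 * y1 - (x2 * y2) ≠ 0 := by
    intro h
    apply hne
    rw [hrP, hrQ, hf1, hf2, sub_eq_zero.mp h]
  have hrne : rP - rQ ≠ 0 := sub_ne_zero.mpr hne
  -- products of coordinates of the sum and difference
  have ht3 : (x3*y3) * (x1*x2^2 - y2*y1^2)^2 = (y1 - x2*y2*x1^2) * (x1*y1*y2^2 - x2) := by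
    linear_combination (y3*(x1*x2^2 - y2*y1^2)) * e3 + (y1 - x2*y2*x1^2) * e3y
  have ht4 : (x4*y4) * (x1*y2^2 - x2*y1^2)^2 = (y1 - y2*x2*x1^2) * (x1*y1*x2^2 - y2) := by
    linear_combination (y4*(x1*y2^2 - x2*y1^2)) * e4 + (y1 - y2*x2*x1^2) * e4y
  have hprod : ((x3*y3) * (x4*y4)) * (x1*y1 - x2*y2)^2
      = x1*y1 + x2*y2 + (x1*y1)^2*(x2*y2)^2 - d*((x1*y1)*(x2*y2)) := by
    apply mul_right_cancel₀ (mul_ne_zero (pow_ne_zero 2 hden1) (pow_ne_zero 2 hden2))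
    linear_combination
      ((x1*y1 - x2*y2)^2 * ((x4*y4)*(x1*y2^2 - x2*y1^2)^2)) * ht3
      + ((x1*y1 - x2*y2)^2 * ((y1 - x2*y2*x1^2)*(x1*y1*y2^2 - x2))) * ht4
      + ((3)*y1^2*x2^3*y2^3 + (2)*y1^2*x2^3*y2^6 + (2)*y1^2*x2^6*y2^3 + (-1)*y1^5*y2^3 + (-1)*y1^5*y2^6 + (-1)*y1^5*x2^3 + (-5)*y1^5*x2^3*y2^3 + (-2)*y1^5*x2^3*y2^6 + (-1)*y1^5*x2^6 + (-2)*y1^5*x2^6*y2^3 + (2)*y1^8*x2^3*y2^3 + (2)*y1^8*x2^3*y2^6 + (2)*y1^8*x2^6*y2^3 + (-2)*x1*y1^3*x2^2*y2^2 + (-1)*x1*y1^3*x2^2*y2^5 + (-1)*x1*y1^3*x2^5*y2^2 + (1)*x1*y1^6*x2^2*y2^2 + (1)*x1*y1^6*x2^2*y2^5 + (-1)*x1*y1^6*x2^2*y2^8 + (1)*x1*y1^6*x2^5*y2^2 + (-2)*x1*y1^6*x2^5*y2^5 + (-1)*x1*y1^6*x2^8*y2^2 + (-3)*x1^2*y1*x2^4*y2^4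 + (-1)*x1^2*y1*x2^4*y2^7 + (-1)*x1^2*y1*x2^7*y2^4 + (2)*x1^2*y1^4*x2*y2^4 + (2)*x1^2*y1^4*x2^4*y2 + (3)*x1^2*y1^4*x2^4*y2^4 + (2)*x1^2*y1^4*x2^4*y2^7 + (2)*x1^2*y1^4*x2^7*y2^4 + (-1)*x1^2*y1^7*x2^4*y2^4 + (1)*x1^3*y1^2*x2^3*y2^3 + (2)*x1^3*y1^2*x2^3*y2^6 + (2)*x1^3*y1^2*x2^6*y2^3 + (-2)*x1^3*y1^5*x2^3*y2^3 + (-1)*x1^4*y1^3*x2^2*y2^5 + (-1)*x1^4*y1^3*x2^5*y2^2 + (-2)*x1^4*y1^3*x2^5*y2^5 + (1)*x1^5*y1^4*x2^4*y2^4 + (-3)*d*y1^2*x2^4*y2^4 + (-1)*d*y1^2*x2^4*y2^7 + (-1)*d*y1^2*x2^7*y2^4 + (2)*d*y1^5*x2*y2^4 + (1)*d*y1^5*x2*y2^7 + (2)*d*y1^5*x2^4*y2 + (6)*d*y1^5*x2^4*y2^4 + (2)*d*y1^5*x2^4*y2^7 + (1)*d*y1^5*x2^7*y2 + (2)*d*y1^5*x2^7*y2^4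 + (-2)*d*y1^8*x2^4*y2^4 + (1)*d*x1*y1^3*x2^3*y2^3 + (-2)*d*x1*y1^6*x2^3*y2^3 + (1)*d*x1^2*y1*x2^5*y2^5 + (-1)*d*x1^2*y1^4*x2^2*y2^5 + (-1)*d*x1^2*y1^4*x2^5*y2^2 + (-2)*d*x1^2*y1^4*x2^5*y2^5 + (1)*d*x1^3*y1^5*x2^4*y2^4 + (1)*d^2*y1^2*x2^5*y2^5 + (-1)*d^2*y1^5*x2^2*y2^5 + (-1)*d^2*y1^5*x2^5*y2^2 + (-2)*d^2*y1^5*x2^5*y2^5 + (1)*d^2*x1*y1^6*x2^4*y2^4) * hP + ((-2)*y1^2*x2^3*y2^3 + (1)*y1^5*y2^3 + (1)*y1^5*x2^3 + (1)*y1^8*y2^3 + (1)*y1^8*x2^3 + (-2)*y1^11*x2^3*y2^3 + (1)*x1*y1^6*x2^2*y2^2 + (1)*x1*y1^6*x2^2*y2^5 + (1)*x1*y1^6*x2^5*y2^2 + (-2)*x1*y1^9*x2^2*y2^2 + (1)*x1*y1^9*x2^2*y2^5 + (1)*x1*y1^9*x2^5*y2^2 + (1)*x1^2*y1*x2^4*y2^4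 + (1)*x1^2*y1^4*x2*y2 + (-1)*x1^2*y1^4*x2*y2^4 + (-1)*x1^2*y1^4*x2^4*y2 + (-1)*x1^2*y1^4*x2^4*y2^4 + (-2)*x1^2*y1^7*x2^4*y2^4 + (1)*d*y1^2*x2^4*y2^4 + (-1)*d*y1^5*x2*y2^4 + (-1)*d*y1^5*x2^4*y2 + (-1)*d*y1^5*x2^4*y2^4 + (-1)*d*y1^8*x2*y2^4 + (-1)*d*y1^8*x2^4*y2 + (-2)*d*y1^8*x2^4*y2^4 + (2)*d*x1*y1^3*x2^3*y2^3 + (-1)*d*x1*y1^6*y2^3 + (-1)*d*x1*y1^6*x2^3 + (-1)*d*x1*y1^6*x2^3*y2^3 + (3)*d*x1*y1^9*x2^3*y2^3 + (-1)*d*x1^2*y1^4*x2^2*y2^2 + (1)*d*x1^2*y1^7*x2^2*y2^2 + (-1)*d*x1^2*y1^7*x2^2*y2^5 + (-1)*d*x1^2*y1^7*x2^5*y2^2 + (-1)*d^2*x1*y1^3*x2^4*y2^4 + (1)*d^2*x1*y1^6*x2*y2^4 + (1)*d^2*x1*y1^6*x2^4*y2 + (2)*d^2*x1*y1^6*x2^4*y2^4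 + (-1)*d^2*x1^2*y1^7*x2^3*y2^3) * hQ
  have hsum : ((x3*y3) + (x4*y4)) * (x1*y1 - x2*y2)^2
      = -1 + 2*(x1*y1)*(x2*y2)^2 + 2*(x1*y1)^2*(x2*y2) + d*(x1*y1 + x2*y2)
        - d^2*((x1*y1)*(x2*y2)) := by
    apply mul_right_cancel₀ (mul_ne_zero (pow_ne_zero 2 hden1) (pow_ne_zero 2 hden2))
    linear_combination
      ((x1*y1 - x2*y2)^2 * (x1*y2^2 - x2*y1^2)^2) * ht3
      + ((x1*y1 - x2*y2)^2 * (x1*x2^2 - y2*y1^2)^2) * ht4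
      + ((-1)*y1^2*x2^2*y2^5 + (-1)*y1^2*x2^2*y2^8 + (-1)*y1^2*x2^5*y2^2 + (-2)*y1^2*x2^5*y2^5 + (-1)*y1^2*x2^8*y2^2 + (4)*y1^5*x2^2*y2^2 + (-1)*y1^5*x2^2*y2^5 + (-4)*y1^5*x2^2*y2^8 + (-1)*y1^5*x2^5*y2^2 + (-8)*y1^5*x2^5*y2^5 + (-4)*y1^5*x2^8*y2^2 + (2)*y1^8*x2^2*y2^2 + (2)*y1^8*x2^2*y2^5 + (2)*y1^8*x2^5*y2^2 + (1)*x1*x2^4*y2^4 + (1)*x1*x2^4*y2^7 + (1)*x1*x2^7*y2^4 + (-1)*x1*y1^3*x2*y2^4 + (-1)*x1*y1^3*x2*y2^7 + (-1)*x1*y1^3*x2^4*y2 + (8)*x1*y1^3*x2^4*y2^4 + (6)*x1*y1^3*x2^4*y2^7 + (-1)*x1*y1^3*x2^7*y2 + (6)*x1*y1^3*x2^7*y2^4 + (-1)*x1*y1^6*x2*y2^4 + (-1)*x1*y1^6*x2*y2^7 + (-1)*x1*y1^6*x2^4*y2 + (-4)*x1*y1^6*x2^4*y2^4 + (-1)*x1*y1^6*x2^7*y2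 + (-2)*x1^2*y1*x2^3*y2^6 + (-1)*x1^2*y1*x2^3*y2^9 + (-2)*x1^2*y1*x2^6*y2^3 + (-2)*x1^2*y1*x2^6*y2^6 + (-1)*x1^2*y1*x2^9*y2^3 + (1)*x1^2*y1^4*y2^6 + (-4)*x1^2*y1^4*x2^3*y2^3 + (1)*x1^2*y1^4*x2^6 + (-2)*x1^2*y1^7*x2^3*y2^3 + (1)*x1^3*y1^2*x2^2*y2^5 + (2)*x1^3*y1^2*x2^2*y2^8 + (1)*x1^3*y1^2*x2^5*y2^2 + (-2)*x1^3*y1^2*x2^5*y2^5 + (2)*x1^3*y1^2*x2^8*y2^2 + (2)*x1^3*y1^5*x2^2*y2^5 + (2)*x1^3*y1^5*x2^5*y2^2 + (-1)*x1^4*y1^3*x2*y2^7 + (-1)*x1^4*y1^3*x2^7*y2 + (-1)*d*y1^2*x2^3*y2^9 + (-2)*d*y1^2*x2^6*y2^6 + (-1)*d*y1^2*x2^9*y2^3 + (-8)*d*y1^5*x2^3*y2^3 + (-2)*d*y1^8*x2^3*y2^3 + (-1)*d*x1*x2^5*y2^5 + (3)*d*x1*y1^3*x2^2*y2^5 + (2)*d*x1*y1^3*x2^2*y2^8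 + (3)*d*x1*y1^3*x2^5*y2^2 + (-2)*d*x1*y1^3*x2^5*y2^5 + (2)*d*x1*y1^3*x2^8*y2^2 + (2)*d*x1*y1^6*x2^2*y2^5 + (2)*d*x1*y1^6*x2^5*y2^2 + (-1)*d*x1^2*y1*x2^4*y2^4 + (-1)*d*x1^2*y1^4*x2*y2^7 + (-1)*d*x1^2*y1^4*x2^7*y2 + (-1)*d^2*y1^2*x2^4*y2^4 + (4)*d^2*y1^5*x2^4*y2^4 + (-2)*d^2*x1*y1^3*x2^3*y2^6 + (-2)*d^2*x1*y1^3*x2^6*y2^3 + (1)*d^2*x1^2*y1*x2^5*y2^5 + (1)*d^3*y1^2*x2^5*y2^5) * hP + ((1)*y1^2*x2^2*y2^5 + (1)*y1^2*x2^5*y2^2 + (-4)*y1^5*x2^2*y2^2 + (5)*y1^5*x2^2*y2^5 + (5)*y1^5*x2^5*y2^2 + (-5)*y1^8*x2^2*y2^2 + (4)*y1^8*x2^2*y2^5 + (4)*y1^8*x2^5*y2^2 + (-2)*y1^11*x2^2*y2^2 + (-1)*x1*x2^4*y2^4 + (1)*x1*y1^3*x2*y2^4 + (1)*x1*y1^3*x2^4*y2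 + (-7)*x1*y1^3*x2^4*y2^4 + (2)*x1*y1^6*x2*y2^4 + (2)*x1*y1^6*x2^4*y2 + (-6)*x1*y1^6*x2^4*y2^4 + (1)*x1*y1^9*x2*y2^4 + (1)*x1*y1^9*x2^4*y2 + (1)*x1^2*y1*x2^3*y2^6 + (1)*x1^2*y1*x2^6*y2^3 + (1)*x1^2*y1^4*x2^3*y2^6 + (1)*x1^2*y1^4*x2^6*y2^3 + (-1)*x1^2*y1^7*y2^3 + (-1)*x1^2*y1^7*x2^3 + (4)*x1^2*y1^7*x2^3*y2^3 + (1)*d*y1^2*x2^3*y2^6 + (1)*d*y1^2*x2^6*y2^3 + (4)*d*y1^5*x2^3*y2^3 + (1)*d*y1^5*x2^3*y2^6 + (1)*d*y1^5*x2^6*y2^3 + (4)*d*y1^8*x2^3*y2^3 + (-3)*d*x1*y1^3*x2^2*y2^5 + (-3)*d*x1*y1^3*x2^5*y2^2 + (4)*d*x1*y1^6*x2^2*y2^2 + (-6)*d*x1*y1^6*x2^2*y2^5 + (-6)*d*x1*y1^6*x2^5*y2^2 + (1)*d*x1*y1^9*x2^2*y2^2 + (2)*d*x1^2*y1*x2^4*y2^4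 + (-1)*d*x1^2*y1^4*x2*y2^4 + (-1)*d*x1^2*y1^4*x2^4*y2 + (7)*d*x1^2*y1^4*x2^4*y2^4 + (1)*d^2*y1^2*x2^4*y2^4 + (1)*d^2*y1^5*x2^4*y2^4 + (-1)*d^2*x1*y1^3*x2^3*y2^6 + (-1)*d^2*x1*y1^3*x2^6*y2^3 + (-4)*d^2*x1*y1^6*x2^3*y2^3 + (2)*d^2*x1^2*y1^4*x2^2*y2^5 + (2)*d^2*x1^2*y1^4*x2^5*y2^2 + (-1)*d^3*x1*y1^3*x2^4*y2^4) * hQ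
  have hu : rP * (x1*y1)^2 = (x1*y1)^3 + d*(x1*y1) - 1 := by
    rw [hrP, hf1]; exact div_mul_cancel₀ _ (pow_ne_zero 2 ha)
  have hv : rQ * (x2*y2)^2 = (x2*y2)^3 + d*(x2*y2) - 1 := by
    rw [hrQ, hf2]; exact div_mul_cancel₀ _ (pow_ne_zero 2 hb)
  have hmain : hessF18 x3 y3 * hessF18 x4 y4
      = (((x3*y3)*(x4*y4))^3 + d*((x3*y3)*(x4*y4))*((x3*y3) + (x4*y4))^2
          - 2*d*((x3*y3)*(x4*y4))^2 + d^2*((x3*y3)*(x4*y4))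
          - ((x3*y3) + (x4*y4))^3 + 3*((x3*y3) + (x4*y4))*((x3*y3)*(x4*y4))
          - d*((x3*y3) + (x4*y4)) + 1) / (((x3*y3)*(x4*y4))^2) := by
    rw [hf3, hf4, div_mul_div_comm]; congr 1
    · ring
    · ring
  rw [hmain]
  exact hessian_final d (x1*y1) (x2*y2) ((x3*y3) + (x4*y4)) ((x3*y3)*(x4*y4)) rP rQ
    ha hb habne (mul_ne_zero hs3 hs4) hrne hu hv hsum hprod
end

section
/- Let P=(x₁,y₁) and Q=(x₂,y₂) be points on the Huff curve E with all coordinates of P, Q, P+Q and P−Q nonzero and with the denominators in the sum and difference formulas nonzero; let (x₃,y₃)=P+Q and (x₄,y₄)=P−Q. Set r_P = x₁y₁ + 1/(x₁y₁), r_Q = x₂y₂ + 1/(x₂y₂), and A = (a²+b²)/(ab). If r_P ≠ r_Q, then (x₃y₃ + 1/(x₃y₃))·(x₄y₄ + 1/(x₄y₄)) = ((r_P·r_Q + 4)² + 16A·(r_P + r_Q) + 16A²)/(r_P − r_Q)². -/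
theorem key3' {K : Type*} [Field K] (r1 r2 A u1 u2 : K)
    (h1 : r1 + A ≠ 0) (h2 : r2 + A ≠ 0)
    (e1 : u1 * (r1 + A) = r1 ^ 2 - 4) (e2 : u2 * (r2 + A) = r2 ^ 2 - 4) :
    ((2*r1*r2 - r1*u2 - r2*u1 + u1*u2 + 8) ^ 2 - 4*A^2*(u1*u2)) * (r1 - r2) ^ 2
      = ((r1*r2 + 4) ^ 2 + 16*A*(r1 + r2) + 16*A^2) * (u1 - u2) ^ 2 := by
  have f1 : u1 = (r1 ^ 2 - 4) / (r1 + A) := by rw [eq_div_iff h1]; exact e1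
  have f2 : u2 = (r2 ^ 2 - 4) / (r2 + A) := by rw [eq_div_iff h2]; exact e2
  rw [f1, f2]; field_simp; ring

set_option maxHeartbeats 2000000 in
/-- Differential addition for the degree-4 compression
`f₄(x,y) = xy + 1/(xy)` on the Huff curve `a·x·(y² − 1) = b·y·(x² − 1)`. -/
theorem huff_deg4_diff_add {K : Type*} [Field K] (a b : K)
    (hchar : (2 : K) ≠ 0) (hab : a * b ≠ 0) (hab2 : a ^ 2 ≠ b ^ 2)
    (x1 y1 x2 y2 x3 y3 x4 y4 : K)
    (hx1 : x1 ≠ 0) (hy1 : y1 ≠ 0) (hx2 : x2 ≠ 0) (hy2 : y2 ≠ 0)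
    (hx3ne : x3 ≠ 0) (hy3ne : y3 ≠ 0) (hx4ne : x4 ≠ 0) (hy4ne : y4 ≠ 0)
    (hP : a * x1 * (y1 ^ 2 - 1) = b * y1 * (x1 ^ 2 - 1))
    (hQ : a * x2 * (y2 ^ 2 - 1) = b * y2 * (x2 ^ 2 - 1))
    (hden1 : 1 + x1 * x2 ≠ 0) (hden2 : 1 - x1 * x2 ≠ 0)
    (hden3 : 1 + y1 * y2 ≠ 0) (hden4 : 1 - y1 * y2 ≠ 0)
    (hx3 : x3 = (x1 + x2) * (1 + y1 * y2) / ((1 + x1 * x2) * (1 - y1 * y2)))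
    (hy3 : y3 = (y1 + y2) * (1 + x1 * x2) / ((1 - x1 * x2) * (1 + y1 * y2)))
    (hx4 : x4 = (x1 - x2) * (1 - y1 * y2) / ((1 - x1 * x2) * (1 + y1 * y2)))
    (hy4 : y4 = (y1 - y2) * (1 - x1 * x2) / ((1 + x1 * x2) * (1 - y1 * y2)))
    (rP rQ A : K)
    (hrP : rP = x1 * y1 + 1 / (x1 * y1)) (hrQ : rQ = x2 * y2 + 1 / (x2 * y2))
    (hA : A = (a ^ 2 + b ^ 2) / (a * b))
    (hne : rP ≠ rQ) :
    (x3 * y3 + 1 / (x3 * y3)) * (x4 * y4 + 1 / (x4 * y4)) =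
      ((rP * rQ + 4) ^ 2 + 16 * A * (rP + rQ) + 16 * A ^ 2) / (rP - rQ) ^ 2 := by
  have ha : a ≠ 0 := fun h => hab (by rw [h, zero_mul])
  have hb : b ≠ 0 := fun h => hab (by rw [h, mul_zero])
  -- abbreviations (plain haves)
  set s1 : K := x1 - 1/x1 with hs1
  set t1 : K := y1 - 1/y1 with ht1
  set s2 : K := x2 - 1/x2 with hs2
  set t2 : K := y2 - 1/y2 with ht2
  set U1 : K := s1 * t1 with hU1
  set U2 : K := s2 * t2 with hU2
  set N3 : K := (x1 + x2) * (y1 + y2) with hN3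
  set D3 : K := (1 - x1*x2) * (1 - y1*y2) with hD3
  set N4 : K := (x1 - x2) * (y1 - y2) with hN4
  set D4 : K := (1 + x1*x2) * (1 + y1*y2) with hD4
  set W : K := x1*y1*x2*y2 with hW
  have hWne : W ≠ 0 := by
    rw [hW]; exact mul_ne_zero (mul_ne_zero (mul_ne_zero hx1 hy1) hx2) hy2
  -- curve relations
  have hC1 : a * t1 = b * s1 := by
    rw [ht1, hs1]; field_simp; linear_combination hP
  have hC2 : a * t2 = b * s2 := by
    rw [ht2, hs2]; field_simp; linear_combination hQ
  have hA' : A * (a*b) = a^2 + b^2 := by rw [hA]; field_simp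
  have hu1 : a * U1 = b * s1^2 := by rw [hU1]; linear_combination s1 * hC1
  have hu2 : a * U2 = b * s2^2 := by rw [hU2]; linear_combination s2 * hC2
  -- u-relation : U * (r + A) = r^2 - 4
  have h11a : (a*b) * (s1^2 + t1^2) = (a^2 + b^2) * U1 := by
    rw [hU1]; linear_combination (b*t1 - a*s1) * hC1
  have h11a2 : (a*b) * (s2^2 + t2^2) = (a^2 + b^2) * U2 := by
    rw [hU2]; linear_combination (b*t2 - a*s2) * hC2
  have h11b : rP^2 - 4 - U1*rP = s1^2 + t1^2 := by
    rw [hrP, hU1, hs1, ht1]; field_simp; ring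
  have h11b2 : rQ^2 - 4 - U2*rQ = s2^2 + t2^2 := by
    rw [hrQ, hU2, hs2, ht2]; field_simp; ring
  have hu1r : U1 * (rP + A) = rP^2 - 4 := by
    have h : U1 * (rP + A) * (a*b) = (rP^2 - 4) * (a*b) := by
      linear_combination (-(a*b)) * h11b - h11a + U1 * hA'
    exact mul_right_cancel₀ hab h
  have hu2r : U2 * (rQ + A) = rQ^2 - 4 := by
    have h : U2 * (rQ + A) * (a*b) = (rQ^2 - 4) * (a*b) := by
      linear_combination (-(a*b)) * h11b2 - h11a2 + U2 * hA'
    exact mul_right_cancel₀ hab h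
  -- rP + A ≠ 0
  have hAne : ∀ r u : K, u * (r + A) = r^2 - 4 → r + A ≠ 0 := by
    intro r u hur h0
    rw [h0, mul_zero] at hur
    have h4 : (r - 2) * (r + 2) = 0 := by linear_combination -hur
    have hrA : A = -r := by linear_combination h0
    rcases mul_eq_zero.mp h4 with h2 | h2
    · have hr2 : r = 2 := by linear_combination h2
      have hsum : (a + b)^2 = 0 := by
        have : A = -2 := by rw [hrA, hr2]
        linear_combination -hA' + (a*b) * this
      have : a + b = 0 := by
        exact pow_eq_zero_iff (two_ne_zero (α := ℕ)) |>.mp hsum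
      exact hab2 (by linear_combination (a - b) * this)
    · have hr2 : r = -2 := by linear_combination h2
      have hsum : (a - b)^2 = 0 := by
        have : A = 2 := by rw [hrA, hr2]; ring
        linear_combination -hA' + (a*b) * this
      have : a - b = 0 := by
        exact pow_eq_zero_iff (two_ne_zero (α := ℕ)) |>.mp hsum
      exact hab2 (by linear_combination (a + b) * this)
  have hA1ne : rP + A ≠ 0 := hAne rP U1 hu1r
  have hA2ne : rQ + A ≠ 0 := hAne rQ U2 hu2r
  have hK3 := key3' rP rQ A U1 U2 hA1ne hA2ne hu1r hu2r
  -- KEY1 : denominator identity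
  have hsq : a^2 * (t1^2 - t2^2) = b^2 * (s1^2 - s2^2) := by
    linear_combination (a*t1 + b*s1) * hC1 - (a*t2 + b*s2) * hC2
  have hpure1 : N3 * D3 * (N4 * D4) = (s1^2 - s2^2) * (t1^2 - t2^2) * W^2 := by
    rw [hN3, hD3, hN4, hD4, hs1, hs2, ht1, ht2, hW]; field_simp; ring
  have hKEY1 : N3 * D3 * (N4 * D4) = (U1 - U2)^2 * W^2 := by
    have h : N3 * D3 * (N4 * D4) * a^2 = (U1 - U2)^2 * W^2 * a^2 := by
      linear_combination a^2 * hpure1 + (s1^2 - s2^2) * W^2 * hsq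
        - (W^2 * (a*(U1 - U2) + b*(s1^2 - s2^2))) * (hu1 - hu2)
    exact mul_right_cancel₀ (pow_ne_zero 2 ha) h
  -- KEY2 : numerator identity
  have hVcross : a^2 * (t1*t2) = b^2 * (s1*s2) := by
    linear_combination (a*t2) * hC1 + (b*s1) * hC2
  have hVa : a^2 * (s1*s2 + t1*t2) = (a^2 + b^2) * (s1*s2) := by
    linear_combination hVcross
  have hss : (b*(s1*s2))^2 = a^2 * (U1*U2) := by
    linear_combination (-(a*U2)) * hu1 - (b*s1^2) * hu2
  have hVV2 : (2*(s1*s2 + t1*t2))^2 = 4*A^2*(U1*U2) := by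
    have h : (2*(s1*s2 + t1*t2))^2 * (a^4*b^2) = 4*A^2*(U1*U2) * (a^4*b^2) := by
      linear_combination 4*b^2*(a^2*(s1*s2 + t1*t2) + (a^2 + b^2)*(s1*s2)) * hVa
        + 4*(a^2+b^2)^2 * hss - 4*(U1*U2)*a^2*(a^2 + b^2 + A*a*b) * hA'
    exact mul_right_cancel₀ (mul_ne_zero (pow_ne_zero 4 ha) (pow_ne_zero 2 hb)) h
  have hMW : (2*rP*rQ - rP*U2 - rQ*U1 + U1*U2 + 8) * W
      = 2*(x1^2*y1^2+1)*(x2^2*y2^2+1) - (x1^2*y1^2+1)*((x2^2-1)*(y2^2-1))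
        - (x2^2*y2^2+1)*((x1^2-1)*(y1^2-1))
        + (x1^2-1)*(y1^2-1)*((x2^2-1)*(y2^2-1)) + 8*(x1*y1*x2*y2) := by
    rw [hrP, hrQ, hU1, hU2, hs1, hs2, ht1, ht2, hW]
    field_simp [mul_ne_zero hx1 hy1, mul_ne_zero hx2 hy2]
  have hVW : (2*(s1*s2 + t1*t2)) * W
      = 2*((x1^2-1)*(x2^2-1)*(y1*y2) + (y1^2-1)*(y2^2-1)*(x1*x2)) := by
    rw [hs1, hs2, ht1, ht2, hW]
    field_simp
  have he0 : (N3^2 + D3^2) * (N4^2 + D4^2)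
      = (2*(x1^2*y1^2+1)*(x2^2*y2^2+1) - (x1^2*y1^2+1)*((x2^2-1)*(y2^2-1))
        - (x2^2*y2^2+1)*((x1^2-1)*(y1^2-1))
        + (x1^2-1)*(y1^2-1)*((x2^2-1)*(y2^2-1)) + 8*(x1*y1*x2*y2))^2
        - (2*((x1^2-1)*(x2^2-1)*(y1*y2) + (y1^2-1)*(y2^2-1)*(x1*x2)))^2 := by
    rw [hN3, hD3, hN4, hD4]
    ring
  have hKEY2 : (N3^2 + D3^2) * (N4^2 + D4^2)
      = ((2*rP*rQ - rP*U2 - rQ*U1 + U1*U2 + 8)^2 - 4*A^2*(U1*U2)) * W^2 := by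
    linear_combination he0
      - ((2*rP*rQ - rP*U2 - rQ*U1 + U1*U2 + 8)*W
          + (2*(x1^2*y1^2+1)*(x2^2*y2^2+1) - (x1^2*y1^2+1)*((x2^2-1)*(y2^2-1))
            - (x2^2*y2^2+1)*((x1^2-1)*(y1^2-1))
            + (x1^2-1)*(y1^2-1)*((x2^2-1)*(y2^2-1)) + 8*(x1*y1*x2*y2))) * hMW
      + ((2*(s1*s2 + t1*t2))*W
          + 2*((x1^2-1)*(x2^2-1)*(y1*y2) + (y1^2-1)*(y2^2-1)*(x1*x2))) * hVW
      - W^2 * hVV2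
  -- assemble
  have hD3ne : D3 ≠ 0 := by rw [hD3]; exact mul_ne_zero hden2 hden4
  have hD4ne : D4 ≠ 0 := by rw [hD4]; exact mul_ne_zero hden1 hden3
  have hW3 : x3 * y3 = N3 / D3 := by
    rw [hx3, hy3, hN3, hD3]; field_simp
  have hW4 : x4 * y4 = N4 / D4 := by
    rw [hx4, hy4, hN4, hD4]; field_simp
  have hW3ne : x3 * y3 ≠ 0 := mul_ne_zero hx3ne hy3ne
  have hW4ne : x4 * y4 ≠ 0 := mul_ne_zero hx4ne hy4ne
  have hN3ne : N3 ≠ 0 := by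
    intro h
    apply hW3ne
    rw [hW3, h, zero_div]
  have hN4ne : N4 ≠ 0 := by
    intro h
    apply hW4ne
    rw [hW4, h, zero_div]
  have L3 : x3 * y3 + 1 / (x3 * y3) = (N3^2 + D3^2) / (N3 * D3) := by
    rw [hW3]; field_simp
  have L4 : x4 * y4 + 1 / (x4 * y4) = (N4^2 + D4^2) / (N4 * D4) := by
    rw [hW4]; field_simp
  rw [L3, L4, div_mul_div_comm,
    div_eq_div_iff (mul_ne_zero (mul_ne_zero hN3ne hD3ne) (mul_ne_zero hN4ne hD4ne))
      (pow_ne_zero 2 (sub_ne_zero.mpr hne))]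
  linear_combination (rP - rQ)^2 * hKEY2
    - ((rP*rQ + 4)^2 + 16*A*(rP + rQ) + 16*A^2) * (hKEY1) * 1
    + W^2 * hK3
end

section
/- Let P=(x₁,y₁) be a point on the Huff curve E with x₁y₁ ≠ 0, with the denominators of the doubling formula nonzero, and with [2]P = (x₃,y₃) satisfying x₃y₃ ≠ 0. Set r = x₁y₁ + 1/(x₁y₁). If ab·(ab·(r³ − 4r) + (a²+b²)·r² − 4(a²+b²)) ≠ 0, then x₃y₃ + 1/(x₃y₃) = ((ab)²·(r² + 4)² + 32·(a²+b²)·(ab)·r + 16·(a²+b²)²) / (4ab·(ab·(r³ − 4r) + (a²+b²)·r² − 4·(a²+b²))). -/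
set_option maxHeartbeats 4000000 in
/-- Doubling for the degree-4 compression `f₄(x,y) = xy + 1/(xy)` on the Huff
curve `a·x·(y² − 1) = b·y·(x² − 1)`. -/
theorem huff_deg4_doubling {K : Type*} [Field K] (a b : K)
    (hchar : (2 : K) ≠ 0) (hab : a * b ≠ 0) (hab2 : a ^ 2 ≠ b ^ 2)
    (x1 y1 x3 y3 : K)
    (hxy1 : x1 * y1 ≠ 0) (hxy3 : x3 * y3 ≠ 0)
    (hP : a * x1 * (y1 ^ 2 - 1) = b * y1 * (x1 ^ 2 - 1))
    (hden1 : (x1 ^ 2 + 1) * y1 ^ 2 - x1 ^ 2 - 1 ≠ 0)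
    (hden2 : (x1 ^ 2 - 1) * y1 ^ 2 + x1 ^ 2 - 1 ≠ 0)
    (hx3 : x3 = (2 * y1 ^ 2 + 2) * x1 / ((x1 ^ 2 + 1) * y1 ^ 2 - x1 ^ 2 - 1))
    (hy3 : y3 = (2 * x1 ^ 2 + 2) * y1 / ((x1 ^ 2 - 1) * y1 ^ 2 + x1 ^ 2 - 1))
    (r : K) (hr : r = x1 * y1 + 1 / (x1 * y1))
    (hM0 : a * b * (a * b * (r ^ 3 - 4 * r) + (a ^ 2 + b ^ 2) * r ^ 2
        - 4 * (a ^ 2 + b ^ 2)) ≠ 0) :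
    x3 * y3 + 1 / (x3 * y3) =
      ((a * b) ^ 2 * (r ^ 2 + 4) ^ 2 + 32 * (a ^ 2 + b ^ 2) * (a * b) * r
          + 16 * (a ^ 2 + b ^ 2) ^ 2)
        / (4 * (a * b) * (a * b * (r ^ 3 - 4 * r) + (a ^ 2 + b ^ 2) * r ^ 2
          - 4 * (a ^ 2 + b ^ 2))) := by
  have hx1 : x1 ≠ 0 := fun h => hxy1 (by simp [h])
  have hy1 : y1 ≠ 0 := fun h => hxy1 (by simp [h])
  have ha : a ≠ 0 := fun h => hab (by rw [h, zero_mul])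
  have hb : b ≠ 0 := fun h => hab (by rw [h, mul_zero])
  have h4 : (4 : K) ≠ 0 := by
    have : (4 : K) = 2 * 2 := by norm_num
    rw [this]; exact mul_ne_zero hchar hchar
  have hD : (((x1 ^ 2 + 1) * y1 ^ 2 - x1 ^ 2 - 1) * ((x1 ^ 2 - 1) * y1 ^ 2 + x1 ^ 2 - 1)) ≠ 0 := mul_ne_zero hden1 hden2
  have hval : x3 * y3 = 4 * (x1 * y1) * (y1 ^ 2 + 1) * (x1 ^ 2 + 1) / (((x1 ^ 2 + 1) * y1 ^ 2 - x1 ^ 2 - 1) * ((x1 ^ 2 - 1) * y1 ^ 2 + x1 ^ 2 - 1)) := by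
    rw [hx3, hy3, div_mul_div_comm]
    congr 1 <;> ring
  have hN : 4 * (x1 * y1) * (y1 ^ 2 + 1) * (x1 ^ 2 + 1) ≠ 0 := fun h => hxy3 (by rw [hval, h, zero_div])
  have hMval : a * b * (a * b * (r ^ 3 - 4 * r) + (a ^ 2 + b ^ 2) * r ^ 2
      - 4 * (a ^ 2 + b ^ 2)) = a * b * (((x1 ^ 2 * y1 ^ 2 + 1) ^ 2 - 4 * x1 ^ 2 * y1 ^ 2) * (a * b * (x1 ^ 2 * y1 ^ 2 + 1) + (a ^ 2 + b ^ 2) * (x1 * y1))) / (x1 * y1) ^ 3 := by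
    rw [hr]; field_simp; ring
  have hMt : (((x1 ^ 2 * y1 ^ 2 + 1) ^ 2 - 4 * x1 ^ 2 * y1 ^ 2) * (a * b * (x1 ^ 2 * y1 ^ 2 + 1) + (a ^ 2 + b ^ 2) * (x1 * y1))) ≠ 0 := by
    intro h
    apply hM0
    rw [hMval, h, mul_zero, zero_div]
  have hbig : 4 * a * b * (((x1 ^ 2 * y1 ^ 2 + 1) ^ 2 - 4 * x1 ^ 2 * y1 ^ 2) * (a * b * (x1 ^ 2 * y1 ^ 2 + 1) + (a ^ 2 + b ^ 2) * (x1 * y1))) * (x1 * y1) ≠ 0 :=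
    mul_ne_zero (mul_ne_zero (mul_ne_zero (mul_ne_zero h4 ha) hb) hMt) hxy1
  have hdenR : 4 * (a * b) * (a * b * (r ^ 3 - 4 * r) + (a ^ 2 + b ^ 2) * r ^ 2
      - 4 * (a ^ 2 + b ^ 2)) ≠ 0 := by
    rw [mul_assoc]; exact mul_ne_zero h4 hM0
  have hRHS : ((a * b) ^ 2 * (r ^ 2 + 4) ^ 2 + 32 * (a ^ 2 + b ^ 2) * (a * b) * r
          + 16 * (a ^ 2 + b ^ 2) ^ 2)
        / (4 * (a * b) * (a * b * (r ^ 3 - 4 * r) + (a ^ 2 + b ^ 2) * r ^ 2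
          - 4 * (a ^ 2 + b ^ 2)))
      = ((a * b) ^ 2 * ((x1 ^ 2 * y1 ^ 2 + 1) ^ 2 + 4 * x1 ^ 2 * y1 ^ 2) ^ 2 + 32 * (a ^ 2 + b ^ 2) * (a * b) * (x1 ^ 2 * y1 ^ 2 + 1) * (x1 * y1) ^ 3 + 16 * (a ^ 2 + b ^ 2) ^ 2 * (x1 * y1) ^ 4) / (4 * a * b * (((x1 ^ 2 * y1 ^ 2 + 1) ^ 2 - 4 * x1 ^ 2 * y1 ^ 2) * (a * b * (x1 ^ 2 * y1 ^ 2 + 1) + (a ^ 2 + b ^ 2) * (x1 * y1))) * (x1 * y1)) := by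
    rw [div_eq_div_iff hdenR hbig, hr]
    field_simp
    ring
  rw [hval, hRHS, one_div_div, div_add_div _ _ hD hN,
    div_eq_div_iff (mul_ne_zero hD hN) hbig]
  linear_combination ((-64) * a ^ 3 * x1 ^ 10 * y1 ^ 9 + (-128) * a ^ 3 * x1 ^ 10 * y1 ^ 7 + (-64) * a ^ 3 * x1 ^ 10 * y1 ^ 5 + (-64) * a ^ 3 * x1 ^ 8 * y1 ^ 9 + (-128) * a ^ 3 * x1 ^ 8 * y1 ^ 7 + (-64) * a ^ 3 * x1 ^ 8 * y1 ^ 5 + 64 * a ^ 3 * x1 ^ 6 * y1 ^ 9 + 128 * a ^ 3 * x1 ^ 6 * y1 ^ 7 + 64 * a ^ 3 * x1 ^ 6 * y1 ^ 5 + 64 * a ^ 3 * x1 ^ 4 * y1 ^ 9 + 128 * a ^ 3 * x1 ^ 4 * y1 ^ 7 + 64 * a ^ 3 * x1 ^ 4 * y1 ^ 5 + 4 * a ^ 2 * b * x1 ^ 13 * y1 ^ 12 + 4 * a ^ 2 * b * x1 ^ 13 * y1 ^ 10 + (-4) * a ^ 2 * b * x1 ^ 13 * y1 ^ 8 + (-4)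 * a ^ 2 * b * x1 ^ 13 * y1 ^ 6 + (-72) * a ^ 2 * b * x1 ^ 11 * y1 ^ 10 + (-136) * a ^ 2 * b * x1 ^ 11 * y1 ^ 8 + (-56) * a ^ 2 * b * x1 ^ 11 * y1 ^ 6 + 8 * a ^ 2 * b * x1 ^ 11 * y1 ^ 4 + (-8) * a ^ 2 * b * x1 ^ 9 * y1 ^ 12 + (-8) * a ^ 2 * b * x1 ^ 9 * y1 ^ 10 + (-116) * a ^ 2 * b * x1 ^ 9 * y1 ^ 8 + (-244) * a ^ 2 * b * x1 ^ 9 * y1 ^ 6 + (-132) * a ^ 2 * b * x1 ^ 9 * y1 ^ 4 + (-4) * a ^ 2 * b * x1 ^ 9 * y1 ^ 2 + 208 * a ^ 2 * b * x1 ^ 7 * y1 ^ 10 + 208 * a ^ 2 * b * x1 ^ 7 * y1 ^ 8 + (-208) * a ^ 2 * b * x1 ^ 7 * y1 ^ 6 + (-208) * a ^ 2 * b * x1 ^ 7 * y1 ^ 4 + 4 * a ^ 2 * b * x1 ^ 5 * y1 ^ 12 + 132 * a ^ 2 * b * x1 ^ 5 * y1 ^ 10 + 244 * a ^ 2 * b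 * x1 ^ 5 * y1 ^ 8 + 116 * a ^ 2 * b * x1 ^ 5 * y1 ^ 6 + 8 * a ^ 2 * b * x1 ^ 5 * y1 ^ 4 + 8 * a ^ 2 * b * x1 ^ 5 * y1 ^ 2 + (-8) * a ^ 2 * b * x1 ^ 3 * y1 ^ 10 + 56 * a ^ 2 * b * x1 ^ 3 * y1 ^ 8 + 136 * a ^ 2 * b * x1 ^ 3 * y1 ^ 6 + 72 * a ^ 2 * b * x1 ^ 3 * y1 ^ 4 + 4 * a ^ 2 * b * x1 * y1 ^ 8 + 4 * a ^ 2 * b * x1 * y1 ^ 6 + (-4) * a ^ 2 * b * x1 * y1 ^ 4 + (-4) * a ^ 2 * b * x1 * y1 ^ 2 + (-4) * a * b ^ 2 * x1 ^ 12 * y1 ^ 13 + 8 * a * b ^ 2 * x1 ^ 12 * y1 ^ 9 + (-4) * a * b ^ 2 * x1 ^ 12 * y1 ^ 5 + (-4) * a * b ^ 2 * x1 ^ 10 * y1 ^ 13 + 72 * a * b ^ 2 * x1 ^ 10 * y1 ^ 11 + 8 * a * b ^ 2 * x1 ^ 10 * y1 ^ 9 + (-208) * a * b ^ 2 * x1 ^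 10 * y1 ^ 7 + (-132) * a * b ^ 2 * x1 ^ 10 * y1 ^ 5 + 8 * a * b ^ 2 * x1 ^ 10 * y1 ^ 3 + 4 * a * b ^ 2 * x1 ^ 8 * y1 ^ 13 + 136 * a * b ^ 2 * x1 ^ 8 * y1 ^ 11 + 116 * a * b ^ 2 * x1 ^ 8 * y1 ^ 9 + (-208) * a * b ^ 2 * x1 ^ 8 * y1 ^ 7 + (-244) * a * b ^ 2 * x1 ^ 8 * y1 ^ 5 + (-56) * a * b ^ 2 * x1 ^ 8 * y1 ^ 3 + (-4) * a * b ^ 2 * x1 ^ 8 * y1 + 4 * a * b ^ 2 * x1 ^ 6 * y1 ^ 13 + 56 * a * b ^ 2 * x1 ^ 6 * y1 ^ 11 + 244 * a * b ^ 2 * x1 ^ 6 * y1 ^ 9 + 208 * a * b ^ 2 * x1 ^ 6 * y1 ^ 7 + (-116) * a * b ^ 2 * x1 ^ 6 * y1 ^ 5 + (-136) * a * b ^ 2 * x1 ^ 6 * y1 ^ 3 + (-4) * a * b ^ 2 * x1 ^ 6 * y1 + (-8) * a * b ^ 2 * x1 ^ 4 * y1 ^ 11 + 132 * a * b ^ 2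 * x1 ^ 4 * y1 ^ 9 + 208 * a * b ^ 2 * x1 ^ 4 * y1 ^ 7 + (-8) * a * b ^ 2 * x1 ^ 4 * y1 ^ 5 + (-72) * a * b ^ 2 * x1 ^ 4 * y1 ^ 3 + 4 * a * b ^ 2 * x1 ^ 4 * y1 + 4 * a * b ^ 2 * x1 ^ 2 * y1 ^ 9 + (-8) * a * b ^ 2 * x1 ^ 2 * y1 ^ 5 + 4 * a * b ^ 2 * x1 ^ 2 * y1 + 64 * b ^ 3 * x1 ^ 9 * y1 ^ 10 + 64 * b ^ 3 * x1 ^ 9 * y1 ^ 8 + (-64) * b ^ 3 * x1 ^ 9 * y1 ^ 6 + (-64) * b ^ 3 * x1 ^ 9 * y1 ^ 4 + 128 * b ^ 3 * x1 ^ 7 * y1 ^ 10 + 128 * b ^ 3 * x1 ^ 7 * y1 ^ 8 + (-128) * b ^ 3 * x1 ^ 7 * y1 ^ 6 + (-128) * b ^ 3 * x1 ^ 7 * y1 ^ 4 + 64 * b ^ 3 * x1 ^ 5 * y1 ^ 10 + 64 * b ^ 3 * x1 ^ 5 * y1 ^ 8 + (-64) * b ^ 3 * x1 ^ 5 * y1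 ^ 6 + (-64) * b ^ 3 * x1 ^ 5 * y1 ^ 4) * hP
end

section
/- Let P=(x₁,y₁) be a point on the Huff curve E with x₁y₁ ≠ 0, with the denominators of the doubling formula nonzero, and with [2]P = (x₃,y₃) satisfying x₃y₃ ≠ 0. Set r = f₈(x₁,y₁) and A = (a²+b²)/(ab). If r·(r² + 4A·r + 16) ≠ 0, then f₈(x₃,y₃) = (r² − 16)²/(4r·(r² + 4A·r + 16)). -/
set_option maxHeartbeats 4000000

/-- The degree-8 compression function on the Huff curve. -/
def huffF8 {K : Type*} [Field K] (x y : K) : K :=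
  x * y + 1 / (x * y) - x / y - y / x

theorem huffF8_div {K : Type*} [Field K] (u d v e : K) (hu : u ≠ 0) (hd : d ≠ 0)
    (hv : v ≠ 0) (he : e ≠ 0) :
    huffF8 (u / d) (v / e) =
      (u ^ 2 * v ^ 2 + d ^ 2 * e ^ 2 - u ^ 2 * e ^ 2 - d ^ 2 * v ^ 2) / (d * e * u * v) := by
  have hde := mul_ne_zero hd he
  have huv := mul_ne_zero hu hv
  have hdv := mul_ne_zero hd hv
  have heu := mul_ne_zero he hu
  rw [huffF8, div_mul_div_comm, one_div_div,
    show u / d / (v / e) = u * e / (d * v) by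
      rw [div_eq_mul_inv (u / d), inv_div, div_mul_div_comm],
    show v / e / (u / d) = v * d / (e * u) by
      rw [div_eq_mul_inv (v / e), inv_div, div_mul_div_comm],
    div_add_div _ _ hde huv, div_sub_div _ _ (mul_ne_zero hde huv) hdv,
    div_sub_div _ _ (mul_ne_zero (mul_ne_zero hde huv) hdv) heu,
    div_eq_div_iff (mul_ne_zero (mul_ne_zero (mul_ne_zero hde huv) hdv) heu)
      (mul_ne_zero (mul_ne_zero (mul_ne_zero hd he) hu) hv)]
  ring

theorem rhs_div {K : Type*} [Field K] (p q s t : K) (h4 : (4 : K) ≠ 0)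
    (hp : p ≠ 0) (hq : q ≠ 0) (hs : s ≠ 0) (ht : t ≠ 0) :
    ((p / q) ^ 2 - 16) ^ 2 / (4 * (p / q) * (s / t)) =
      t * (p ^ 2 - 16 * q ^ 2) ^ 2 / (4 * p * s * q ^ 3) := by
  field_simp

/-- Doubling for the degree-8 compression
`f₈(x,y) = xy + 1/(xy) − x/y − y/x` on the Huff curve
`a·x·(y² − 1) = b·y·(x² − 1)`. -/
theorem huff_deg8_doubling {K : Type*} [Field K] (a b : K)
    (hchar : (2 : K) ≠ 0) (hab : a * b ≠ 0) (hab2 : a ^ 2 ≠ b ^ 2)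
    (x1 y1 x3 y3 : K)
    (hxy1 : x1 * y1 ≠ 0) (hxy3 : x3 * y3 ≠ 0)
    (hP : a * x1 * (y1 ^ 2 - 1) = b * y1 * (x1 ^ 2 - 1))
    (hden1 : (x1 ^ 2 + 1) * y1 ^ 2 - x1 ^ 2 - 1 ≠ 0)
    (hden2 : (x1 ^ 2 - 1) * y1 ^ 2 + x1 ^ 2 - 1 ≠ 0)
    (hx3 : x3 = (2 * y1 ^ 2 + 2) * x1 / ((x1 ^ 2 + 1) * y1 ^ 2 - x1 ^ 2 - 1))
    (hy3 : y3 = (2 * x1 ^ 2 + 2) * y1 / ((x1 ^ 2 - 1) * y1 ^ 2 + x1 ^ 2 - 1))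
    (r A : K) (hr : r = huffF8 x1 y1) (hA : A = (a ^ 2 + b ^ 2) / (a * b))
    (hM0 : r * (r ^ 2 + 4 * A * r + 16) ≠ 0) :
    huffF8 x3 y3 = (r ^ 2 - 16) ^ 2 / (4 * r * (r ^ 2 + 4 * A * r + 16)) := by
  have hx1 : x1 ≠ 0 := fun h => hxy1 (by simp [h])
  have hy1 : y1 ≠ 0 := fun h => hxy1 (by simp [h])
  have ha : a ≠ 0 := fun h => hab (by simp [h])
  have hb : b ≠ 0 := fun h => hab (by simp [h])
  have hx3' : x3 ≠ 0 := fun h => hxy3 (by simp [h])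
  have hy3' : y3 ≠ 0 := fun h => hxy3 (by simp [h])
  have hn1 : (2 * y1 ^ 2 + 2) * x1 ≠ 0 := by
    intro h; apply hx3'; rw [hx3, h, zero_div]
  have hn2 : (2 * x1 ^ 2 + 2) * y1 ≠ 0 := by
    intro h; apply hy3'; rw [hy3, h, zero_div]
  have hr0 : r ≠ 0 := fun h => hM0 (by rw [h, zero_mul])
  have hq0 : r ^ 2 + 4 * A * r + 16 ≠ 0 := fun h => hM0 (by rw [h, mul_zero])
  have h4 : (4 : K) ≠ 0 := by
    have := mul_ne_zero hchar hchar; norm_num at this ⊢; exact this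
  have hr2 : r = (x1 ^ 2 * y1 ^ 2 + 1 - x1 ^ 2 - y1 ^ 2) / (x1 * y1) := by
    rw [hr, huffF8]; field_simp
  have hN : x1 ^ 2 * y1 ^ 2 + 1 - x1 ^ 2 - y1 ^ 2 ≠ 0 := by
    intro h; exact hr0 (by rw [hr2, h, zero_div])
  have hMrel : r ^ 2 + 4 * A * r + 16 =
      ((x1 ^ 2 * y1 ^ 2 + 1 - x1 ^ 2 - y1 ^ 2) ^ 2 * (a * b)
        + 4 * (a ^ 2 + b ^ 2) * (x1 ^ 2 * y1 ^ 2 + 1 - x1 ^ 2 - y1 ^ 2) * (x1 * y1)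
        + 16 * (a * b) * (x1 ^ 2 * y1 ^ 2)) / (a * b * x1 ^ 2 * y1 ^ 2) := by
    rw [hr2, hA]; field_simp
  have hM : (x1 ^ 2 * y1 ^ 2 + 1 - x1 ^ 2 - y1 ^ 2) ^ 2 * (a * b)
        + 4 * (a ^ 2 + b ^ 2) * (x1 ^ 2 * y1 ^ 2 + 1 - x1 ^ 2 - y1 ^ 2) * (x1 * y1)
        + 16 * (a * b) * (x1 ^ 2 * y1 ^ 2) ≠ 0 := by
    intro h; exact hq0 (by rw [hMrel, h, zero_div])
  have habxy : a * b * x1 ^ 2 * y1 ^ 2 ≠ 0 :=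
    mul_ne_zero (mul_ne_zero (mul_ne_zero ha hb) (pow_ne_zero 2 hx1)) (pow_ne_zero 2 hy1)
  have key1 : huffF8 x3 y3 =
      (((2 * y1 ^ 2 + 2) * x1) ^ 2 * ((2 * x1 ^ 2 + 2) * y1) ^ 2
        + ((x1 ^ 2 + 1) * y1 ^ 2 - x1 ^ 2 - 1) ^ 2 * ((x1 ^ 2 - 1) * y1 ^ 2 + x1 ^ 2 - 1) ^ 2
        - ((2 * y1 ^ 2 + 2) * x1) ^ 2 * ((x1 ^ 2 - 1) * y1 ^ 2 + x1 ^ 2 - 1) ^ 2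
        - ((x1 ^ 2 + 1) * y1 ^ 2 - x1 ^ 2 - 1) ^ 2 * ((2 * x1 ^ 2 + 2) * y1) ^ 2) /
      (((x1 ^ 2 + 1) * y1 ^ 2 - x1 ^ 2 - 1) * ((x1 ^ 2 - 1) * y1 ^ 2 + x1 ^ 2 - 1)
        * ((2 * y1 ^ 2 + 2) * x1) * ((2 * x1 ^ 2 + 2) * y1)) := by
    rw [hx3, hy3]
    exact huffF8_div _ _ _ _ hn1 hden1 hn2 hden2
  have key2 : (r ^ 2 - 16) ^ 2 / (4 * r * (r ^ 2 + 4 * A * r + 16)) =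
      a * b * x1 ^ 2 * y1 ^ 2 *
        ((x1 ^ 2 * y1 ^ 2 + 1 - x1 ^ 2 - y1 ^ 2) ^ 2 - 16 * (x1 * y1) ^ 2) ^ 2 /
      (4 * (x1 ^ 2 * y1 ^ 2 + 1 - x1 ^ 2 - y1 ^ 2) *
        ((x1 ^ 2 * y1 ^ 2 + 1 - x1 ^ 2 - y1 ^ 2) ^ 2 * (a * b)
          + 4 * (a ^ 2 + b ^ 2) * (x1 ^ 2 * y1 ^ 2 + 1 - x1 ^ 2 - y1 ^ 2) * (x1 * y1)
          + 16 * (a * b) * (x1 ^ 2 * y1 ^ 2)) * (x1 * y1) ^ 3) := by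
    rw [hMrel, hr2]
    exact rhs_div _ _ _ _ h4 hN hxy1 hM habxy
  rw [key1, key2]
  have hD1 : ((x1 ^ 2 + 1) * y1 ^ 2 - x1 ^ 2 - 1) * ((x1 ^ 2 - 1) * y1 ^ 2 + x1 ^ 2 - 1)
      * ((2 * y1 ^ 2 + 2) * x1) * ((2 * x1 ^ 2 + 2) * y1) ≠ 0 :=
    mul_ne_zero (mul_ne_zero (mul_ne_zero hden1 hden2) hn1) hn2
  have hD2 : 4 * (x1 ^ 2 * y1 ^ 2 + 1 - x1 ^ 2 - y1 ^ 2) *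
      ((x1 ^ 2 * y1 ^ 2 + 1 - x1 ^ 2 - y1 ^ 2) ^ 2 * (a * b)
        + 4 * (a ^ 2 + b ^ 2) * (x1 ^ 2 * y1 ^ 2 + 1 - x1 ^ 2 - y1 ^ 2) * (x1 * y1)
        + 16 * (a * b) * (x1 ^ 2 * y1 ^ 2)) * (x1 * y1) ^ 3 ≠ 0 :=
    mul_ne_zero (mul_ne_zero (mul_ne_zero h4 hN) hM) (pow_ne_zero 3 hxy1)
  rw [div_eq_div_iff hD1 hD2]
  linear_combination (16*b*x1^4*y1^3 + (-96)*b*x1^4*y1^5 + 240*b*x1^4*y1^7 + (-320)*b*x1^4*y1^9 + 240*b*x1^4*y1^11 + (-96)*b*x1^4*y1^13 + 16*b*x1^4*y1^15 + (-80)*b*x1^6*y1^3 + (-32)*b*x1^6*y1^5 + 848*b*x1^6*y1^7 + (-1472)*b*x1^6*y1^9 + 848*b*x1^6*y1^11 + (-32)*b*x1^6*y1^13 + (-80)*b*x1^6*y1^15 + 160*b*x1^8*y1^3 + 576*b*x1^8*y1^5 + 352*b*x1^8*y1^7 + (-2176)*b*x1^8*y1^9 + 352*b*x1^8*y1^11 +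 576*b*x1^8*y1^13 + 160*b*x1^8*y1^15 + (-160)*b*x1^10*y1^3 + (-576)*b*x1^10*y1^5 + (-352)*b*x1^10*y1^7 + 2176*b*x1^10*y1^9 + (-352)*b*x1^10*y1^11 + (-576)*b*x1^10*y1^13 + (-160)*b*x1^10*y1^15 + 80*b*x1^12*y1^3 + 32*b*x1^12*y1^5 + (-848)*b*x1^12*y1^7 + 1472*b*x1^12*y1^9 + (-848)*b*x1^12*y1^11 + 32*b*x1^12*y1^13 + 80*b*x1^12*y1^15 + (-16)*b*x1^14*y1^3 + 96*b*x1^14*y1^5 + (-240)*b*x1^14*y1^7 + 320*b*x1^14*y1^9 + (-240)*b*x1^14*y1^11 + 96*b*x1^14*y1^13 + (-16)*b*x1^14*y1^15 + (-16)*a*x1^3*y1^4 + 80*a*x1^3*y1^6 + (-160)*a*x1^3*y1^8 + 160*a*x1^3*y1^10 + (-80)*a*x1^3*y1^12 + 16*a*x1^3*y1^14 + 96*a*x1^5*y1^4 + 32*a*x1^5*y1^6 + (-576)*a*x1^5*y1^8 + 576*a*x1^5*y1^10 + (-32)*a*x1^5*y1^12 + (-96)*a*x1^5*y1^14 + (-240)*a*x1^7*y1^4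 + (-848)*a*x1^7*y1^6 + (-352)*a*x1^7*y1^8 + 352*a*x1^7*y1^10 + 848*a*x1^7*y1^12 + 240*a*x1^7*y1^14 + 320*a*x1^9*y1^4 + 1472*a*x1^9*y1^6 + 2176*a*x1^9*y1^8 + (-2176)*a*x1^9*y1^10 + (-1472)*a*x1^9*y1^12 + (-320)*a*x1^9*y1^14 + (-240)*a*x1^11*y1^4 + (-848)*a*x1^11*y1^6 + (-352)*a*x1^11*y1^8 + 352*a*x1^11*y1^10 + 848*a*x1^11*y1^12 + 240*a*x1^11*y1^14 + 96*a*x1^13*y1^4 + 32*a*x1^13*y1^6 + (-576)*a*x1^13*y1^8 + 576*a*x1^13*y1^10 + (-32)*a*x1^13*y1^12 + (-96)*a*x1^13*y1^14 + (-16)*a*x1^15*y1^4 + 80*a*x1^15*y1^6 + (-160)*a*x1^15*y1^8 + 160*a*x1^15*y1^10 + (-80)*a*x1^15*y1^12 + 16*a*x1^15*y1^14) * hP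
end

section
/- Let P = (x,y) be a point on the Huff curve E with x·y ≠ 0. Then each of the eight points (x,y), (−x,−y), (1/x,−y), (−1/x,y), (−x,1/y), (x,−1/y), (1/x,1/y), (−1/x,−1/y) also lies on E, and the compression function f₈ takes the same value at all eight of these points: f₈(x,y) = f₈(−x,−y) = f₈(1/x,−y) = f₈(−1/x,y) = f₈(−x,1/y) = f₈(x,−1/y) = f₈(1/x,1/y) = f₈(−1/x,−1/y). -/
/-- The Huff curve predicate for `a·x·(y² − 1) = b·y·(x² − 1)`. -/
def onHuff {K : Type*} [Field K] (a b x y : K) : Prop :=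
  a * x * (y ^ 2 - 1) = b * y * (x ^ 2 - 1)

theorem huffOrbit_of_invariant {K : Type*} [DivisionRing K] (P : K → K → Prop)
    (neg_neg : ∀ {u v}, P u v → P (-u) (-v)) (inv_neg : ∀ {u v}, P u v → P u⁻¹ (-v))
    (neg_inv : ∀ {u v}, P u v → P (-u) v⁻¹) {x y : K} (h : P x y) :
    P x y ∧ P (-x) (-y) ∧ P (1 / x) (-y) ∧ P (-(1 / x)) y ∧ P (-x) (1 / y) ∧
      P x (-(1 / y)) ∧ P (1 / x) (1 / y) ∧ P (-(1 / x)) (-(1 / y)) := by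
  simp only [one_div]
  refine ⟨h, neg_neg h, inv_neg h, ?_, neg_inv h, ?_, ?_, ?_⟩
  · simpa using neg_neg (inv_neg h)
  · simpa using neg_neg (neg_inv h)
  · simpa using neg_neg (inv_neg (neg_inv h))
  · simpa using inv_neg (neg_inv h)

section Invariance

variable {K : Type*} [Field K]

theorem huffF8_neg_neg (x y : K) : huffF8 (-x) (-y) = huffF8 x y := by
  unfold huffF8; ring

theorem huffF8_inv_neg (x y : K) : huffF8 x⁻¹ (-y) = huffF8 x y := by
  simp only [huffF8, div_eq_mul_inv, mul_inv, inv_inv, inv_neg]; ring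

theorem huffF8_neg_inv (x y : K) : huffF8 (-x) y⁻¹ = huffF8 x y := by
  simp only [huffF8, div_eq_mul_inv, mul_inv, inv_inv, inv_neg]; ring

namespace onHuff

variable {a b x y : K}

theorem neg_neg (h : onHuff a b x y) : onHuff a b (-x) (-y) := by
  unfold onHuff at *; linear_combination -h

-- At `x = 0` (where `0⁻¹ = 0`) both the hypothesis and the conclusion say `b * y = 0`.
theorem inv_neg (h : onHuff a b x y) : onHuff a b x⁻¹ (-y) := by
  unfold onHuff at *
  rcases eq_or_ne x 0 with rfl | hx
  · rw [inv_zero]; linear_combination -h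
  · field_simp; linear_combination h

theorem neg_inv (h : onHuff a b x y) : onHuff a b (-x) y⁻¹ := by
  unfold onHuff at *
  rcases eq_or_ne y 0 with rfl | hy
  · rw [inv_zero]; linear_combination -h
  · field_simp; linear_combination h

end onHuff

end Invariance

theorem huff_deg8_orbit_general {K : Type*} [Field K] (a b : K)
    (x y : K)
    (hP : onHuff a b x y) :
    (onHuff a b x y ∧ onHuff a b (-x) (-y) ∧ onHuff a b (1 / x) (-y) ∧
      onHuff a b (-(1 / x)) y ∧ onHuff a b (-x) (1 / y) ∧ onHuff a b x (-(1 / y)) ∧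
      onHuff a b (1 / x) (1 / y) ∧ onHuff a b (-(1 / x)) (-(1 / y))) ∧
    (huffF8 x y = huffF8 (-x) (-y) ∧
      huffF8 x y = huffF8 (1 / x) (-y) ∧
      huffF8 x y = huffF8 (-(1 / x)) y ∧
      huffF8 x y = huffF8 (-x) (1 / y) ∧
      huffF8 x y = huffF8 x (-(1 / y)) ∧
      huffF8 x y = huffF8 (1 / x) (1 / y) ∧
      huffF8 x y = huffF8 (-(1 / x)) (-(1 / y))) := by
  refine ⟨huffOrbit_of_invariant (onHuff a b) onHuff.neg_neg onHuff.inv_neg onHuff.neg_inv hP, ?_⟩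
  obtain ⟨-, hf⟩ := huffOrbit_of_invariant (fun u v => huffF8 x y = huffF8 u v)
    (fun h => h.trans (huffF8_neg_neg _ _).symm) (fun h => h.trans (huffF8_inv_neg _ _).symm)
    (fun h => h.trans (huffF8_neg_inv _ _).symm) rfl
  exact hf

/-- The eight points `(±x^{±1}, ±y^{±1})` obtained from a point `(x,y)` on the
Huff curve by `±` and translations by the 2-torsion points at infinity all lie
on the curve and take the same value of the degree-8 compression
`f₈(x,y) = xy + 1/(xy) − x/y − y/x`. -/
theorem huff_deg8_orbit {K : Type*} [Field K] (a b : K)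
    (hchar : (2 : K) ≠ 0) (hab : a * b ≠ 0) (hab2 : a ^ 2 ≠ b ^ 2)
    (x y : K) (hxy : x * y ≠ 0)
    (hP : onHuff a b x y) :
    (onHuff a b x y ∧ onHuff a b (-x) (-y) ∧ onHuff a b (1 / x) (-y) ∧
      onHuff a b (-(1 / x)) y ∧ onHuff a b (-x) (1 / y) ∧ onHuff a b x (-(1 / y)) ∧
      onHuff a b (1 / x) (1 / y) ∧ onHuff a b (-(1 / x)) (-(1 / y))) ∧
    (huffF8 x y = huffF8 (-x) (-y) ∧
      huffF8 x y = huffF8 (1 / x) (-y) ∧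
      huffF8 x y = huffF8 (-(1 / x)) y ∧
      huffF8 x y = huffF8 (-x) (1 / y) ∧
      huffF8 x y = huffF8 x (-(1 / y)) ∧
      huffF8 x y = huffF8 (1 / x) (1 / y) ∧
      huffF8 x y = huffF8 (-(1 / x)) (-(1 / y))) :=
  huff_deg8_orbit_general a b x y hP
end
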